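/- arXiv:2407.21078 — 8 statements merged into one kernel-verified Lean document; each statement's English description precedes it below -/
import Mathlib

section
/- Let 0 ≤ α < √β < 1 and ε > 0, with weights ϱ_k = (1-α)ε⁻¹(α^{-k} + (1-α²/β)^{-1/2} β^{-k/2}) for k ∈ -ℕ₀. Define g : ℓ_ϱ → ℝ by g(x) = ((1-α)Σ_{k∈-ℕ₀} α^{-k} x_k) / (ε + √((1-β)Σ_{k∈-ℕ₀} β^{-k} x_k²)), where g(x) := 0 if the denominator series diverges. Then g is uniformly bounded by ((1-α)/√(1-β)) · (1-α²/β)^{-1/2}. -/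
open scoped ENNReal

/-- The map `g` from the Adam sequence space to `ℝ` (scalar case, index `k : ℕ`
corresponding to the nonpositive integer `-k`). If the denominator series diverges,
`g` is defined to be `0`. -/
noncomputable def adamG (α β ε : ℝ) (x : ℕ → ℝ) : ℝ :=
  if (∑' k : ℕ, ENNReal.ofReal ((1 - β) * β ^ k * (x k) ^ 2)) = ∞ then 0
  else ((1 - α) * ∑' k : ℕ, α ^ k * x k) /
    (ε + Real.sqrt (∑' k : ℕ, ENNReal.ofReal ((1 - β) * β ^ k * (x k) ^ 2)).toReal)

/-! Write `α^k x_k = (α/√β)^k · (√β^k x_k)`. By Cauchy–Schwarz the numerator series is at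
most `(∑ (α²/β)^k)^{1/2} (∑ β^k x_k²)^{1/2} = (1 - α²/β)^{-1/2} (∑ β^k x_k²)^{1/2}` in absolute
value, while the denominator is at least `√(1-β) (∑ β^k x_k²)^{1/2}`; the quotient is therefore
bounded independently of `x` and `ε`. -/

open Real

theorem abs_tsum_mul_le_sqrt_mul_sqrt {ι : Type*} {f g : ι → ℝ}
    (hf : Summable fun i => f i ^ 2) (hg : Summable fun i => g i ^ 2) :
    |∑' i, f i * g i| ≤ √(∑' i, f i ^ 2) * √(∑' i, g i ^ 2) := by
  have hf' : Summable fun i => |f i| ^ (2 : ℝ) := by simpa only [rpow_two, sq_abs] using hf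
  have hg' : Summable fun i => |g i| ^ (2 : ℝ) := by simpa only [rpow_two, sq_abs] using hg
  obtain ⟨hsum, hle⟩ := summable_and_inner_le_Lp_mul_Lq_tsum_of_nonneg .two_two
    (fun i => abs_nonneg (f i)) (fun i => abs_nonneg (g i)) hf' hg'
  simp only [rpow_two, sq_abs, ← sqrt_eq_rpow, ← abs_mul] at hle hsum
  have htri : |∑' i, f i * g i| ≤ ∑' i, |f i * g i| := by
    simpa only [Real.norm_eq_abs] using norm_tsum_le_tsum_norm (f := fun i => f i * g i) hsum
  exact htri.trans hle

theorem abs_tsum_pow_mul_le {a b : ℝ} (hab : a ^ 2 < b) {x : ℕ → ℝ}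
    (hx : Summable fun k => b ^ k * x k ^ 2) :
    |∑' k, a ^ k * x k| ≤ 1 / √(1 - a ^ 2 / b) * √(∑' k, b ^ k * x k ^ 2) := by
  have hb : 0 < b := (sq_nonneg a).trans_lt hab
  have hsb : 0 < √b := sqrt_pos.2 hb
  have hq : ∀ k : ℕ, ((a / √b) ^ k) ^ 2 = (a ^ 2 / b) ^ k := fun k => by
    rw [← pow_mul, mul_comm, pow_mul, div_pow, sq_sqrt hb.le]
  have hx' : ∀ k : ℕ, (√b ^ k * x k) ^ 2 = b ^ k * x k ^ 2 := fun k => by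
    rw [mul_pow, ← pow_mul, mul_comm k, pow_mul, sq_sqrt hb.le]
  have hsplit : ∀ k : ℕ, a ^ k * x k = (a / √b) ^ k * (√b ^ k * x k) := fun k => by
    rw [← mul_assoc, ← mul_pow, div_mul_cancel₀ _ hsb.ne']
  have hr₀ : 0 ≤ a ^ 2 / b := by positivity
  have hr₁ : a ^ 2 / b < 1 := (div_lt_one hb).2 hab
  have hgeom : ∑' k : ℕ, ((a / √b) ^ k) ^ 2 = (1 - a ^ 2 / b)⁻¹ := by
    rw [tsum_congr hq, tsum_geometric_of_lt_one hr₀ hr₁]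
  have hcs := abs_tsum_mul_le_sqrt_mul_sqrt (f := fun k => (a / √b) ^ k)
    (g := fun k => √b ^ k * x k)
    ((summable_geometric_of_lt_one hr₀ hr₁).congr fun k => (hq k).symm)
    (hx.congr fun k => (hx' k).symm)
  rwa [hgeom, tsum_congr hx', sqrt_inv, ← one_div, ← tsum_congr hsplit] at hcs

theorem toReal_tsum_ofReal {ι : Type*} {f : ι → ℝ} (hf : ∀ i, 0 ≤ f i) :
    (∑' i, ENNReal.ofReal (f i)).toReal = ∑' i, f i := by
  rw [ENNReal.tsum_toReal_eq fun _ => ENNReal.ofReal_ne_top]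
  exact tsum_congr fun i => ENNReal.toReal_ofReal (hf i)

theorem summable_of_tsum_ofReal_ne_top {ι : Type*} {f : ι → ℝ} (hf : ∀ i, 0 ≤ f i)
    (h : ∑' i, ENNReal.ofReal (f i) ≠ ∞) : Summable f :=
  (ENNReal.summable_toReal h).congr fun i => ENNReal.toReal_ofReal (hf i)

theorem abs_div_add_sqrt_mul_le {N c d V ε : ℝ} (hc : 0 ≤ c) (hd : 0 < d)
    (hε : 0 < ε) (hN : |N| ≤ c * √V) : |N / (ε + √(d * V))| ≤ c / √d := by
  have hden : 0 < ε + √(d * V) := by positivity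
  have hsd : 0 < √d := sqrt_pos.2 hd
  rw [abs_div, abs_of_pos hden, div_le_iff₀ hden]
  calc |N| ≤ c * √V := hN
    _ = c / √d * √(d * V) := by rw [sqrt_mul hd.le]; field_simp
    _ ≤ c / √d * (ε + √(d * V)) := by gcongr; linarith

theorem stmt1_g_bounded_general (α β ε : ℝ) (hα : 0 ≤ α) (hαβ : α < Real.sqrt β)
    (hβ : Real.sqrt β < 1) (hε : 0 < ε)
    (x : ℕ → ℝ) :
    |adamG α β ε x| ≤ (1 - α) / Real.sqrt (1 - β) * (1 / Real.sqrt (1 - α ^ 2 / β)) := by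
  have hβ₀ : 0 ≤ β := sqrt_pos.1 (hα.trans_lt hαβ) |>.le
  have hβ₁ : 0 < 1 - β := by nlinarith [sq_sqrt hβ₀, sqrt_nonneg β]
  have hα₁ : 0 ≤ 1 - α := by linarith
  have hα₂ : α ^ 2 < β := by nlinarith [sq_sqrt hβ₀]
  have hw : ∀ k : ℕ, 0 ≤ (1 - β) * β ^ k * x k ^ 2 := fun k => by positivity
  unfold adamG
  split_ifs with hfin
  · rw [abs_zero]; positivity
  have hV : Summable fun k => β ^ k * x k ^ 2 := by
    simpa only [mul_assoc, summable_mul_left_iff hβ₁.ne'] using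
      summable_of_tsum_ofReal_ne_top hw hfin
  rw [toReal_tsum_ofReal hw]
  simp only [mul_assoc, tsum_mul_left, div_mul_eq_mul_div]
  refine abs_div_add_sqrt_mul_le (by positivity) hβ₁ hε ?_
  rw [abs_mul, abs_of_nonneg hα₁, mul_assoc]
  exact mul_le_mul_of_nonneg_left (abs_tsum_pow_mul_le hα₂ hV) hα₁

/-- `g` is uniformly bounded by `((1-α)/√(1-β)) · (1-α²/β)^{-1/2}` on `ℓ_ϱ`. -/
theorem stmt1_g_bounded (α β ε : ℝ) (hα : 0 ≤ α) (hαβ : α < Real.sqrt β)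
    (hβ : Real.sqrt β < 1) (hε : 0 < ε)
    (ϱ : ℕ → ℝ)
    (hϱ : ∀ k : ℕ, ϱ k = (1 - α) * ε⁻¹ * (α ^ k + (1 / Real.sqrt (1 - α ^ 2 / β)) * (Real.sqrt β) ^ k))
    (x : ℕ → ℝ) (hx : Summable fun k => ϱ k * |x k|) :
    |adamG α β ε x| ≤ (1 - α) / Real.sqrt (1 - β) * (1 / Real.sqrt (1 - α ^ 2 / β)) :=
  stmt1_g_bounded_general α β ε hα hαβ hβ hε x
end

section
/- Let (ℝ^d, ‖·‖) be an inner-product space with inner product ⟪·,·⟫, and let p ≥ 2. Then for all x, y ∈ ℝ^d: ‖x+y‖^p ≤ ‖x‖^p + p‖x‖^{p-2}⟪x,y⟫ + (1/2)p(p-1)(max(‖x‖, ‖x+y‖))^{p-2}‖y‖². -/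
/-!
Put `a = ‖x‖`, `b = ‖x + y‖` and `M = max a b`. On `[0, M]` the second derivative of `t ↦ t ^ p`
is at most `p (p - 1) M ^ (p - 2)`, so Taylor's theorem (in the form of the tangent line inequality
for the convex function `t ↦ p (p - 1) M ^ (p - 2) t² / 2 - t ^ p`) gives
`b ^ p ≤ a ^ p + p a ^ (p - 1) (b - a) + ½ p (p - 1) M ^ (p - 2) (b - a) ²`.
Since `⟪x, y⟫ = a (b - a) - (‖y‖² - (b - a)²) / 2` and `(b - a)² ≤ ‖y‖²`, trading `a (b - a)` for
`⟪x, y⟫` costs `½ p a ^ (p - 2) (‖y‖² - (b - a)²)`, which is absorbed by raising `(b - a)²` to `‖y‖²`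
in the last term because `a ^ (p - 2) ≤ (p - 1) M ^ (p - 2)`.
-/

open scoped RealInnerProductSpace

open Set

theorem ConvexOn.add_deriv_mul_sub_le {S : Set ℝ} {f : ℝ → ℝ} {f' x y : ℝ}
    (hfc : ConvexOn ℝ S f) (hx : x ∈ S) (hy : y ∈ S) (hf : HasDerivAt f f' x) :
    f x + f' * (y - x) ≤ f y := by
  rcases lt_trichotomy x y with hxy | rfl | hyx
  · have hs := hfc.le_slope_of_hasDerivAt hx hy hxy hf
    rw [slope_def_field, le_div_iff₀ (sub_pos.2 hxy)] at hs
    linarith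
  · simp
  · have hs := hfc.slope_le_of_hasDerivAt hy hx hyx hf
    rw [slope_def_field, div_le_iff₀ (sub_pos.2 hyx)] at hs
    linarith

theorem hasDerivAt_mul_sq_sub_rpow {p : ℝ} (hp : 1 ≤ p) (K t : ℝ) :
    HasDerivAt (fun t : ℝ => K / 2 * t ^ 2 - t ^ p) (K * t - p * t ^ (p - 1)) t := by
  refine (((hasDerivAt_pow 2 t).const_mul (K / 2)).sub
    (Real.hasDerivAt_rpow_const (Or.inr hp))).congr_deriv ?_
  push_cast
  ring

theorem convexOn_mul_sq_sub_rpow {p c K : ℝ} (hp : 2 ≤ p) (hK : p * (p - 1) * c ^ (p - 2) ≤ K) :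
    ConvexOn ℝ (Icc 0 c) (fun t : ℝ => K / 2 * t ^ 2 - t ^ p) := by
  have hf' (t : ℝ) := hasDerivAt_mul_sq_sub_rpow (p := p) (by linarith) K t
  have hf'' (t : ℝ) : HasDerivAt (fun t : ℝ => K * t - p * t ^ (p - 1))
      (K - p * (p - 1) * t ^ (p - 2)) t := by
    refine (((hasDerivAt_id' t).const_mul K).sub
      ((Real.hasDerivAt_rpow_const (Or.inr (by linarith : 1 ≤ p - 1))).const_mul p)).congr_deriv ?_
    rw [show p - 1 - 1 = p - 2 by ring]
    ring
  refine convexOn_of_hasDerivWithinAt2_nonneg (convex_Icc 0 c)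
    (fun t _ => (hf' t).continuousAt.continuousWithinAt) (fun t _ => (hf' t).hasDerivWithinAt)
    (fun t _ => (hf'' t).hasDerivWithinAt) fun t ht => ?_
  rw [interior_Icc] at ht
  have hpow : t ^ (p - 2) ≤ c ^ (p - 2) := Real.rpow_le_rpow ht.1.le ht.2.le (by linarith)
  have hcoef : 0 ≤ p * (p - 1) := by nlinarith
  nlinarith [mul_le_mul_of_nonneg_left hpow hcoef]

theorem rpow_le_rpow_add_mul_sub_add_mul_sq {p a b c : ℝ} (hp : 2 ≤ p) (ha : 0 ≤ a) (hb : 0 ≤ b)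
    (hac : a ≤ c) (hbc : b ≤ c) :
    b ^ p ≤ a ^ p + p * a ^ (p - 1) * (b - a) + 1 / 2 * p * (p - 1) * c ^ (p - 2) * (b - a) ^ 2 := by
  have := (convexOn_mul_sq_sub_rpow hp le_rfl).add_deriv_mul_sub_le ⟨ha, hac⟩ ⟨hb, hbc⟩
    (hasDerivAt_mul_sq_sub_rpow (by linarith) _ a)
  linear_combination this

theorem stmt4_pth_power_expansion_general
    {E : Type*} [NormedAddCommGroup E] [InnerProductSpace ℝ E]
    (p : ℝ) (hp : 2 ≤ p) (x y : E) :
    ‖x + y‖ ^ p ≤ ‖x‖ ^ p + p * ‖x‖ ^ (p - 2) * ⟪x, y⟫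
      + (1 / 2) * p * (p - 1) * (max ‖x‖ ‖x + y‖) ^ (p - 2) * ‖y‖ ^ 2 := by
  set a := ‖x‖
  set b := ‖x + y‖
  set M := max a b
  have hdist : (b - a) ^ 2 ≤ ‖y‖ ^ 2 := by
    have := abs_norm_sub_norm_le (x + y) x
    rw [add_sub_cancel_left] at this
    exact sq_le_sq' (abs_le.1 this).1 (abs_le.1 this).2
  have hinner : ⟪x, y⟫ = a * (b - a) - (‖y‖ ^ 2 - (b - a) ^ 2) / 2 := by
    linear_combination (-1 / 2 : ℝ) * norm_add_sq_real x y
  have ha : 0 ≤ a := norm_nonneg x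
  have hpow_sub_one : a ^ (p - 1) = a ^ (p - 2) * a := by
    rw [← Real.rpow_add_one' ha (by linarith)]
    ring_nf
  have hpow_le : a ^ (p - 2) ≤ (p - 1) * M ^ (p - 2) := by
    have := Real.rpow_le_rpow ha (le_max_left a b) (by linarith : 0 ≤ p - 2)
    nlinarith [Real.rpow_nonneg ha (p - 2)]
  calc b ^ p ≤ a ^ p + p * a ^ (p - 1) * (b - a) + 1 / 2 * p * (p - 1) * M ^ (p - 2) * (b - a) ^ 2 :=
        rpow_le_rpow_add_mul_sub_add_mul_sq hp ha (norm_nonneg _)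
          (le_max_left a b) (le_max_right a b)
    _ ≤ a ^ p + p * a ^ (p - 2) * ⟪x, y⟫ + 1 / 2 * p * (p - 1) * M ^ (p - 2) * ‖y‖ ^ 2 := by
        rw [hinner, hpow_sub_one]
        nlinarith [mul_le_mul_of_nonneg_right hpow_le (sub_nonneg.2 hdist)]

/-- for a norm induced by an inner product and a real exponent `p ≥ 2`,
`‖x+y‖^p ≤ ‖x‖^p + p ‖x‖^{p-2} ⟪x,y⟫ + (1/2) p (p-1) (max ‖x‖ ‖x+y‖)^{p-2} ‖y‖²`. -/
theorem stmt4_pth_power_expansion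
    {E : Type*} [NormedAddCommGroup E] [InnerProductSpace ℝ E] [FiniteDimensional ℝ E]
    (p : ℝ) (hp : 2 ≤ p) (x y : E) :
    ‖x + y‖ ^ p ≤ ‖x‖ ^ p + p * ‖x‖ ^ (p - 2) * ⟪x, y⟫
      + (1 / 2) * p * (p - 1) * (max ‖x‖ ‖x + y‖) ^ (p - 2) * ‖y‖ ^ 2 :=
  stmt4_pth_power_expansion_general p hp x y
end

section
/- Let (γ_n)_{n≥1} be a decreasing positive sequence, n₀ ∈ ℕ₀, ρ ≥ √(γ_{n₀+1}), ζ > 0 with ζρ√(γ_{n₀+1}) < 1, and suppose (γ_n - γ_{n+1})/γ_n² ≤ ζ for all n ≥ n₀+1. Let t_n = Σ_{k=1}^n γ_k and let (n_ℓ)_{ℓ≥0} be the ρ-partition: n_ℓ is the largest integer with t_{n_ℓ} - t_{n_{ℓ-1}} ≤ ρ√(γ_{n_{ℓ-1}+1}). Set K = (1 - ζρ√(γ_{n₀+1}))^{-1}. Then for every ℓ ≥ 1: γ_{n_{ℓ-1}+1}/γ_{n_ℓ+1} ≤ K and γ_{n_{ℓ-1}+1}/γ_{n_ℓ+1} ≤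 1 + ζK(t_{n_ℓ} - t_{n_{ℓ-1}}). -/
/-!
Summing the slope bound `γ m - γ (m + 1) ≤ ζ γ m ²` over one block `n_{ℓ-1} < m ≤ n_ℓ`
of the partition, and bounding one factor `γ m` by `γ (n_{ℓ-1} + 1)`, gives
`γ (n_{ℓ-1} + 1) - γ (n_ℓ + 1) ≤ s γ (n_{ℓ-1} + 1)` with `s = ζ (t_{n_ℓ} - t_{n_{ℓ-1}})`.
The partition condition makes `s ≤ ζ ρ √(γ (n₀ + 1)) < 1`, and both ratio bounds are
then elementary consequences of `x - y ≤ s x`.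
-/

open Finset

theorem sub_le_mul_sum_of_sub_succ_le_mul_sq {γ : ℕ → ℝ} {ζ : ℝ} (hγ : ∀ n, 0 ≤ γ n)
    (hanti : Antitone γ) (hζ : 0 ≤ ζ) {a b : ℕ} (hab : a ≤ b)
    (hstep : ∀ m, a < m → γ m - γ (m + 1) ≤ ζ * γ m ^ 2) :
    γ (a + 1) - γ (b + 1) ≤ ζ * γ (a + 1) * ∑ k ∈ Ico a b, γ (k + 1) := by
  have htelescope := sum_Ico_sub (fun k => -γ (k + 1)) hab
  simp only [neg_sub_neg] at htelescope
  calc γ (a + 1) - γ (b + 1) = ∑ k ∈ Ico a b, (γ (k + 1) - γ (k + 1 + 1)) := htelescope.symm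
    _ ≤ ∑ k ∈ Ico a b, ζ * γ (a + 1) * γ (k + 1) := sum_le_sum fun k hk => by
        have hka : a ≤ k := (mem_Ico.1 hk).1
        calc γ (k + 1) - γ (k + 1 + 1) ≤ ζ * γ (k + 1) ^ 2 := hstep _ (by omega)
          _ = ζ * γ (k + 1) * γ (k + 1) := by ring
          _ ≤ ζ * γ (a + 1) * γ (k + 1) :=
            mul_le_mul_of_nonneg_right (mul_le_mul_of_nonneg_left (hanti (by omega)) hζ) (hγ _)
    _ = ζ * γ (a + 1) * ∑ k ∈ Ico a b, γ (k + 1) := (mul_sum ..).symm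

theorem div_le_inv_one_sub_of_sub_le_mul {x y s c : ℝ} (hx : 0 ≤ x) (hy : 0 < y)
    (hsc : s ≤ c) (hc : c < 1) (h : x - y ≤ s * x) : x / y ≤ (1 - c)⁻¹ := by
  rw [div_le_iff₀ hy, inv_mul_eq_div, le_div_iff₀ (by linarith)]
  nlinarith

theorem div_le_one_add_mul_of_sub_le_mul {x y s K : ℝ} (hy : 0 < y) (hs : 0 ≤ s)
    (hK : x / y ≤ K) (h : x - y ≤ s * x) : x / y ≤ 1 + s * K :=
  calc x / y = 1 + (x - y) / y := by field_simp; ring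
    _ ≤ 1 + s * (x / y) := by
      gcongr
      rw [mul_div_assoc']
      exact div_le_div_of_nonneg_right h hy.le
    _ ≤ 1 + s * K := by gcongr

/-- step-size comparison along a `ρ`-partition.
Here `γ n` is the step size (used for `n ≥ 1`), `t n = Σ_{k=1}^n γ k`, and `(n ℓ)` is the
`ρ`-partition with starting value `n 0 = n₀`: `n (ℓ+1)` is the largest integer with
`t (n (ℓ+1)) - t (n ℓ) ≤ ρ √(γ (n ℓ + 1))`, which is encoded by the two inequalities in
`hpart`.  With `K = (1 - ζρ√(γ (n₀+1)))⁻¹` one has for every `ℓ ≥ 1` both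
`γ_{n_{ℓ-1}+1}/γ_{n_ℓ+1} ≤ K` and `γ_{n_{ℓ-1}+1}/γ_{n_ℓ+1} ≤ 1 + ζ K (t_{n_ℓ} - t_{n_{ℓ-1}})`. -/
theorem stmt5_partition_stepsize_comparison
    (γ : ℕ → ℝ) (hpos : ∀ n, 0 < γ n) (hdec : ∀ n, γ (n + 1) ≤ γ n)
    (t : ℕ → ℝ) (ht : ∀ n, t n = ∑ k ∈ Finset.range n, γ (k + 1))
    (n₀ : ℕ) (ρ ζ : ℝ) (hζ : 0 < ζ)
    (hρ : Real.sqrt (γ (n₀ + 1)) ≤ ρ)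
    (hsmall : ζ * ρ * Real.sqrt (γ (n₀ + 1)) < 1)
    (hslope : ∀ n, n₀ + 1 ≤ n → (γ n - γ (n + 1)) / (γ n) ^ 2 ≤ ζ)
    (n : ℕ → ℕ) (hn0 : n 0 = n₀) (hmono : StrictMono n)
    (hpart : ∀ ℓ : ℕ,
      t (n (ℓ + 1)) - t (n ℓ) ≤ ρ * Real.sqrt (γ (n ℓ + 1)) ∧
      ρ * Real.sqrt (γ (n ℓ + 1)) < t (n (ℓ + 1) + 1) - t (n ℓ))
    (K : ℝ) (hK : K = (1 - ζ * ρ * Real.sqrt (γ (n₀ + 1)))⁻¹) :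
    ∀ ℓ : ℕ, γ (n ℓ + 1) / γ (n (ℓ + 1) + 1) ≤ K ∧
      γ (n ℓ + 1) / γ (n (ℓ + 1) + 1) ≤ 1 + ζ * K * (t (n (ℓ + 1)) - t (n ℓ)) := by
  intro ℓ
  have hanti : Antitone γ := antitone_nat_of_succ_le hdec
  have hab : n ℓ ≤ n (ℓ + 1) := hmono.monotone ℓ.le_succ
  have hstart : n₀ ≤ n ℓ := hn0 ▸ hmono.monotone ℓ.zero_le
  have hgap : t (n (ℓ + 1)) - t (n ℓ) = ∑ k ∈ Ico (n ℓ) (n (ℓ + 1)), γ (k + 1) := by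
    rw [ht, ht, sum_Ico_eq_sub _ hab]
  have hdrop :
      γ (n ℓ + 1) - γ (n (ℓ + 1) + 1) ≤ ζ * (t (n (ℓ + 1)) - t (n ℓ)) * γ (n ℓ + 1) := by
    rw [hgap, mul_right_comm]
    refine sub_le_mul_sum_of_sub_succ_le_mul_sq (fun m => (hpos m).le) hanti hζ.le hab
      fun m hm => ?_
    have := hslope m (by omega)
    rwa [div_le_iff₀ (pow_pos (hpos m) 2)] at this
  have hgap_nonneg : 0 ≤ ζ * (t (n (ℓ + 1)) - t (n ℓ)) :=
    mul_nonneg hζ.le (hgap ▸ sum_nonneg fun k _ => (hpos _).le)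
  have hgap_small : ζ * (t (n (ℓ + 1)) - t (n ℓ)) ≤ ζ * ρ * Real.sqrt (γ (n₀ + 1)) := by
    rw [mul_assoc]
    gcongr
    calc t (n (ℓ + 1)) - t (n ℓ) ≤ ρ * Real.sqrt (γ (n ℓ + 1)) := (hpart ℓ).1
      _ ≤ ρ * Real.sqrt (γ (n₀ + 1)) := by
        gcongr
        · exact (Real.sqrt_nonneg _).trans hρ
        · exact hanti (by omega)
  have hratio : γ (n ℓ + 1) / γ (n (ℓ + 1) + 1) ≤ K := hK ▸
    div_le_inv_one_sub_of_sub_le_mul (hpos _).le (hpos _) hgap_small hsmall hdrop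
  refine ⟨hratio, ?_⟩
  rw [mul_right_comm]
  exact div_le_one_add_mul_of_sub_le_mul (hpos _) hgap_nonneg hratio hdrop
end

section
/- Let ε > 0 and h(x) = 1/(√x + ε) on [0,∞). Let A, B, C be independent real random variables with A > 0 almost surely, E[|h'(A)|] < ∞, E[B] = E[C] = 0, and suppose all expectations below are finite. Then |E[h(A + (B+C)²) C] − E[h'(A)] E[C³]| ≤ E[h''(A)] (2 E[|B|³] E[C²] + 5 E[B²] E[|C|³] + E[|C|⁵]). -/
open MeasureTheory ProbabilityTheory

/-- `h(x) = 1/(√x + ε)`. -/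
noncomputable def hAdam (ε x : ℝ) : ℝ := 1 / (Real.sqrt x + ε)

/-- `h'(x) = −1/(2√x (√x+ε)²)`. -/
noncomputable def hAdam' (ε x : ℝ) : ℝ := -(1 / (2 * Real.sqrt x * (Real.sqrt x + ε) ^ 2))

/-- `h''(x) = 1/(2x(√x+ε)³) + 1/(4 x^{3/2} (√x+ε)²)`. -/
noncomputable def hAdam'' (ε x : ℝ) : ℝ :=
  1 / (2 * x * (Real.sqrt x + ε) ^ 3) + 1 / (4 * x * Real.sqrt x * (Real.sqrt x + ε) ^ 2)

open Set

/-!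
Write `s = (B + C)²` and `t = B²`. Then
`h(A + s) C = [h(A + s) - h(A + t) - h'(A) (s - t)] C + h(A + t) C + h'(A) (s - t) C`.
By independence and `E[C] = 0` the middle term has expectation zero, and since
`(s - t) C = 2 B C² + C³` and `E[B] = 0` the last one has expectation `E[h'(A)] E[C³]`.
As `h''` is nonnegative and nonincreasing, `h'` increases at most linearly with slope
`h''(a)` to the right of `a`, which bounds the Taylor remainder by `h''(A) |s² - t²| / 2`.
Finally `|s² - t²| |C| / 2 ≤ 2 |B|³ C² + 5 B² |C|³ + |C|⁵` (AM-GM absorbs the `|B| |C|⁴`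
term), and the expectation of `h''(A)` times this weight factorizes by independence.
-/

theorem Convex.monotoneOn_of_hasDerivAt_nonneg {D : Set ℝ} (hD : Convex ℝ D) {f f' : ℝ → ℝ}
    (hf : ∀ x ∈ D, HasDerivAt f (f' x) x) (hf'₀ : ∀ x ∈ D, 0 ≤ f' x) : MonotoneOn f D :=
  monotoneOn_of_hasDerivWithinAt_nonneg hD
    (fun x hx ↦ (hf x hx).continuousAt.continuousWithinAt)
    (fun x hx ↦ (hf x (interior_subset hx)).hasDerivWithinAt)
    fun x hx ↦ hf'₀ x (interior_subset hx)

theorem abs_sub_le_abs_sub_of_monotoneOn {D : Set ℝ} {φ ψ : ℝ → ℝ} (hφ : MonotoneOn φ D)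
    (hψφ : MonotoneOn (ψ - φ) D) {x y : ℝ} (hx : x ∈ D) (hy : y ∈ D) :
    |φ x - φ y| ≤ |ψ x - ψ y| := by
  wlog hyx : y ≤ x generalizing x y
  · rw [abs_sub_comm, abs_sub_comm (ψ x)]
    exact this hy hx (le_of_not_ge hyx)
  have h₁ := hφ hy hx hyx
  have h₂ := hψφ hy hx hyx
  simp only [Pi.sub_apply] at h₂
  rw [abs_of_nonneg (sub_nonneg.2 h₁), abs_of_nonneg (by linarith)]
  linarith

theorem abs_taylor_remainder_le_of_antitoneOn {f f' f'' : ℝ → ℝ} {a : ℝ}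
    (hf : ∀ x ∈ Ici a, HasDerivAt f (f' x) x) (hf' : ∀ x ∈ Ici a, HasDerivAt f' (f'' x) x)
    (hf''₀ : ∀ x ∈ Ici a, 0 ≤ f'' x) (hf''_anti : AntitoneOn f'' (Ici a)) {s t : ℝ}
    (hs : 0 ≤ s) (ht : 0 ≤ t) :
    |f (a + s) - f (a + t) - f' a * (s - t)| ≤ f'' a * |s ^ 2 - t ^ 2| / 2 := by
  have hf'_mono : MonotoneOn f' (Ici a) :=
    (convex_Ici a).monotoneOn_of_hasDerivAt_nonneg hf' hf''₀
  have hf'_lip : MonotoneOn (fun x ↦ f'' a * x - f' x) (Ici a) :=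
    (convex_Ici a).monotoneOn_of_hasDerivAt_nonneg
      (fun x hx ↦ ((hasDerivAt_id x).const_mul (f'' a)).sub (hf' x hx) |>.congr_deriv (by simp))
      fun x hx ↦ sub_nonneg.2 (hf''_anti self_mem_Ici hx hx)
  have hshift : ∀ u ∈ Ici (0 : ℝ), a + u ∈ Ici a :=
    fun _ hu ↦ mem_Ici.2 (le_add_of_nonneg_right hu)
  set φ : ℝ → ℝ := fun u ↦ f (a + u) - f' a * u
  have hφ : ∀ u ∈ Ici (0 : ℝ), HasDerivAt φ (f' (a + u) - f' a) u := fun u hu ↦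
    (((hf _ (hshift u hu)).comp_const_add a u).sub ((hasDerivAt_id u).const_mul (f' a))).congr_deriv
      (by simp)
  have hφ_mono : MonotoneOn φ (Ici 0) :=
    (convex_Ici 0).monotoneOn_of_hasDerivAt_nonneg hφ fun u hu ↦
      sub_nonneg.2 (hf'_mono self_mem_Ici (hshift u hu) (hshift u hu))
  have hψφ_mono : MonotoneOn ((fun u ↦ f'' a * u ^ 2 / 2) - φ) (Ici 0) := by
    refine (convex_Ici 0).monotoneOn_of_hasDerivAt_nonneg
      (f' := fun u ↦ f'' a * u - (f' (a + u) - f' a)) (fun u hu ↦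
        ((((hasDerivAt_pow 2 u).const_mul (f'' a)).div_const 2).sub (hφ u hu)).congr_deriv
          (by ring)) fun u hu ↦ ?_
    have := hf'_lip self_mem_Ici (hshift u hu) (hshift u hu)
    simp only at this
    linarith
  have key := abs_sub_le_abs_sub_of_monotoneOn hφ_mono hψφ_mono hs ht
  have hφst : φ s - φ t = f (a + s) - f (a + t) - f' a * (s - t) := by simp only [φ]; ring
  have hψst : f'' a * s ^ 2 / 2 - f'' a * t ^ 2 / 2 = f'' a * (s ^ 2 - t ^ 2) / 2 := by ring
  rwa [hφst, hψst, abs_div, abs_mul, abs_of_nonneg (hf''₀ a self_mem_Ici), abs_two] at key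

def remainderWeight (b c : ℝ) : ℝ := 2 * (|b| ^ 3 * c ^ 2) + 5 * (b ^ 2 * |c| ^ 3) + |c| ^ 5

theorem measurable_remainderWeight : Measurable fun p : ℝ × ℝ ↦ remainderWeight p.1 p.2 := by
  unfold remainderWeight; fun_prop

theorem abs_sq_sq_sub_sq_sq_mul_le_remainderWeight (b c : ℝ) :
    |((b + c) ^ 2) ^ 2 - (b ^ 2) ^ 2| * |c| / 2 ≤ remainderWeight b c := by
  have hcubic : |4 * b ^ 3 + 6 * b ^ 2 * c + 4 * b * c ^ 2 + c ^ 3|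
      ≤ 4 * |b| ^ 3 + 6 * |b| ^ 2 * |c| + 4 * |b| * |c| ^ 2 + |c| ^ 3 := by
    calc _ ≤ |4 * b ^ 3| + |6 * b ^ 2 * c| + |4 * b * c ^ 2| + |c ^ 3| :=
          (abs_add_le _ _).trans (add_le_add_left (abs_add_three _ _ _) _)
      _ = _ := by simp only [abs_mul, abs_pow, abs_of_pos (by norm_num : (0 : ℝ) < 4),
          abs_of_pos (by norm_num : (0 : ℝ) < 6)]
  rw [show ((b + c) ^ 2) ^ 2 - (b ^ 2) ^ 2
      = c * (4 * b ^ 3 + 6 * b ^ 2 * c + 4 * b * c ^ 2 + c ^ 3) by ring, abs_mul]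
  calc _ ≤ |c| * (4 * |b| ^ 3 + 6 * |b| ^ 2 * |c| + 4 * |b| * |c| ^ 2 + |c| ^ 3) * |c| / 2 := by
        gcongr
    _ ≤ remainderWeight b c := by
        rw [remainderWeight, ← sq_abs b, ← sq_abs c]
        nlinarith [mul_nonneg (pow_nonneg (abs_nonneg c) 3) (sq_nonneg (|b| - |c| / 2))]

section hAdam

variable {ε x : ℝ}

theorem hasDerivAt_hAdam (hε : 0 ≤ ε) (hx : 0 < x) : HasDerivAt (hAdam ε) (hAdam' ε x) x := by
  have hsx : 0 < Real.sqrt x := Real.sqrt_pos.2 hx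
  have hd := ((Real.hasDerivAt_sqrt hx.ne').add_const ε).fun_inv (by positivity)
  rw [show hAdam ε = fun y ↦ (Real.sqrt y + ε)⁻¹ from funext fun y ↦ one_div _]
  refine hd.congr_deriv ?_
  rw [hAdam']
  field_simp

theorem hasDerivAt_hAdam' (hε : 0 ≤ ε) (hx : 0 < x) :
    HasDerivAt (hAdam' ε) (hAdam'' ε x) x := by
  have hsx : 0 < Real.sqrt x := Real.sqrt_pos.2 hx
  have hs := Real.hasDerivAt_sqrt hx.ne'
  have hd :=
    (((hs.const_mul 2).fun_mul ((hs.add_const ε).fun_pow 2)).fun_inv (by positivity)).fun_neg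
  rw [show hAdam' ε = fun y ↦ -(2 * Real.sqrt y * (Real.sqrt y + ε) ^ 2)⁻¹ from
    funext fun y ↦ by rw [hAdam', one_div]]
  refine hd.congr_deriv ?_
  rw [hAdam'']
  have hx2 := Real.sq_sqrt hx.le
  generalize Real.sqrt x = r at hx2 hsx ⊢
  subst hx2
  field_simp
  ring

theorem hAdam''_nonneg (hε : 0 ≤ ε) (hx : 0 < x) : 0 ≤ hAdam'' ε x := by
  have := Real.sqrt_pos.2 hx
  unfold hAdam''
  positivity

theorem antitoneOn_hAdam'' (hε : 0 ≤ ε) : AntitoneOn (hAdam'' ε) (Ioi 0) := by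
  intro x (hx : 0 < x) y (hy : 0 < y) hxy
  have := Real.sqrt_pos.2 hx
  unfold hAdam''
  gcongr

theorem abs_hAdam_le (hε : 0 < ε) (x : ℝ) : |hAdam ε x| ≤ ε⁻¹ := by
  have := Real.sqrt_nonneg x
  rw [hAdam, one_div, abs_inv, abs_of_pos (by positivity)]
  exact inv_anti₀ hε (by linarith)

theorem continuous_hAdam (hε : 0 < ε) : Continuous (hAdam ε) :=
  continuous_const.div (Real.continuous_sqrt.add continuous_const) fun x ↦ by positivity

theorem measurable_hAdam' (ε : ℝ) : Measurable (hAdam' ε) := by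
  unfold hAdam'; fun_prop

theorem measurable_hAdam'' (ε : ℝ) : Measurable (hAdam'' ε) := by
  unfold hAdam''; fun_prop

theorem abs_hAdam_taylor_remainder_le (hε : 0 ≤ ε) {a s t : ℝ} (ha : 0 < a) (hs : 0 ≤ s)
    (ht : 0 ≤ t) :
    |hAdam ε (a + s) - hAdam ε (a + t) - hAdam' ε a * (s - t)|
      ≤ hAdam'' ε a * |s ^ 2 - t ^ 2| / 2 :=
  have hpos : ∀ x ∈ Ici a, 0 < x := fun _ hx ↦ ha.trans_le hx
  abs_taylor_remainder_le_of_antitoneOn (fun x hx ↦ hasDerivAt_hAdam hε (hpos x hx))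
    (fun x hx ↦ hasDerivAt_hAdam' hε (hpos x hx)) (fun x hx ↦ hAdam''_nonneg hε (hpos x hx))
    ((antitoneOn_hAdam'' hε).mono hpos) hs ht

theorem abs_hAdam_remainder_mul_le {a : ℝ} (hε : 0 ≤ ε) (ha : 0 < a) (b c : ℝ) :
    |hAdam ε (a + (b + c) ^ 2) * c - hAdam ε (a + b ^ 2) * c
        - hAdam' ε a * (((b + c) ^ 2 - b ^ 2) * c)| ≤ hAdam'' ε a * remainderWeight b c := by
  calc _ = |hAdam ε (a + (b + c) ^ 2) - hAdam ε (a + b ^ 2) - hAdam' ε a * ((b + c) ^ 2 - b ^ 2)|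
        * |c| := by rw [← abs_mul]; ring_nf
    _ ≤ hAdam'' ε a * |((b + c) ^ 2) ^ 2 - (b ^ 2) ^ 2| / 2 * |c| := by
        gcongr
        exact abs_hAdam_taylor_remainder_le hε ha (sq_nonneg _) (sq_nonneg _)
    _ = hAdam'' ε a * (|((b + c) ^ 2) ^ 2 - (b ^ 2) ^ 2| * |c| / 2) := by ring
    _ ≤ hAdam'' ε a * remainderWeight b c := by
        gcongr
        · exact hAdam''_nonneg hε ha
        · exact abs_sq_sq_sub_sq_sq_mul_le_remainderWeight b c

end hAdam

section Moments

variable {Ω : Type*} [MeasurableSpace Ω] {μ : Measure Ω}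

theorem ProbabilityTheory.iIndepFun.indepFun_prodMk_three {β : Type*} [MeasurableSpace β]
    {A B C : Ω → β} (h : iIndepFun ![A, B, C] μ) (hA : Measurable A) (hB : Measurable B)
    (hC : Measurable C) :
    IndepFun A (fun ω ↦ (B ω, C ω)) μ ∧ IndepFun (fun ω ↦ (A ω, B ω)) C μ ∧ IndepFun B C μ := by
  have hmeas : ∀ i, Measurable (![A, B, C] i) := fun i ↦ by fin_cases i <;> assumption
  refine ⟨?_, ?_, ?_⟩
  · simpa using (h.indepFun_prodMk hmeas 1 2 0 (by decide) (by decide)).symm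
  · simpa using h.indepFun_prodMk hmeas 0 1 2 (by decide) (by decide)
  · simpa using h.indepFun (show (1 : Fin 3) ≠ 2 by decide)

variable {B C : Ω → ℝ}

theorem integrable_and_integral_sq_add_sub_sq_mul [IsFiniteMeasure μ] (hBC : IndepFun B C μ)
    (hmB : AEStronglyMeasurable B μ) (hEB : ∫ ω, B ω ∂μ = 0)
    (hB2 : Integrable (fun ω ↦ B ω ^ 2) μ) (hC2 : Integrable (fun ω ↦ C ω ^ 2) μ)
    (hC3 : Integrable (fun ω ↦ C ω ^ 3) μ) :
    Integrable (fun ω ↦ ((B ω + C ω) ^ 2 - B ω ^ 2) * C ω) μ ∧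
      ∫ ω, ((B ω + C ω) ^ 2 - B ω ^ 2) * C ω ∂μ = ∫ ω, C ω ^ 3 ∂μ := by
  have hBC2 : IndepFun B (fun ω ↦ C ω ^ 2) μ :=
    hBC.comp measurable_id (measurable_id.pow_const 2)
  have hB : Integrable B μ := ((memLp_two_iff_integrable_sq hmB).2 hB2).integrable one_le_two
  have hBC2_int : Integrable (fun ω ↦ B ω * C ω ^ 2) μ := hBC2.integrable_mul hB hC2
  rw [show (fun ω ↦ ((B ω + C ω) ^ 2 - B ω ^ 2) * C ω)
      = fun ω ↦ 2 * (B ω * C ω ^ 2) + C ω ^ 3 from funext fun ω ↦ by ring]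
  refine ⟨(hBC2_int.const_mul 2).add hC3, ?_⟩
  rw [integral_add (hBC2_int.const_mul 2) hC3, integral_const_mul,
    hBC2.integral_fun_mul_eq_mul_integral hmB hC2.aestronglyMeasurable, hEB]
  ring

variable (hBC : IndepFun B C μ) (hB3 : Integrable (fun ω ↦ |B ω| ^ 3) μ)
  (hC2 : Integrable (fun ω ↦ C ω ^ 2) μ) (hB2 : Integrable (fun ω ↦ B ω ^ 2) μ)
  (hC3 : Integrable (fun ω ↦ |C ω| ^ 3) μ) (hC5 : Integrable (fun ω ↦ |C ω| ^ 5) μ)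
include hBC hB3 hC2 hB2 hC3 hC5

theorem integrable_remainderWeight : Integrable (fun ω ↦ remainderWeight (B ω) (C ω)) μ :=
  ((((hBC.comp (measurable_id.abs.pow_const 3) (measurable_id.pow_const 2)).integrable_mul hB3
    hC2).const_mul 2).add (((hBC.comp (measurable_id.pow_const 2)
      (measurable_id.abs.pow_const 3)).integrable_mul hB2 hC3).const_mul 5)).add hC5

theorem integral_remainderWeight :
    ∫ ω, remainderWeight (B ω) (C ω) ∂μ
      = 2 * (∫ ω, |B ω| ^ 3 ∂μ) * (∫ ω, C ω ^ 2 ∂μ)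
        + 5 * (∫ ω, B ω ^ 2 ∂μ) * (∫ ω, |C ω| ^ 3 ∂μ) + ∫ ω, |C ω| ^ 5 ∂μ := by
  have hB3C2 : IndepFun (fun ω ↦ |B ω| ^ 3) (fun ω ↦ C ω ^ 2) μ :=
    hBC.comp (measurable_id.abs.pow_const 3) (measurable_id.pow_const 2)
  have hB2C3 : IndepFun (fun ω ↦ B ω ^ 2) (fun ω ↦ |C ω| ^ 3) μ :=
    hBC.comp (measurable_id.pow_const 2) (measurable_id.abs.pow_const 3)
  have h₁ : Integrable (fun ω ↦ 2 * (|B ω| ^ 3 * C ω ^ 2)) μ :=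
    (hB3C2.integrable_mul hB3 hC2).const_mul 2
  have h₂ : Integrable (fun ω ↦ 5 * (B ω ^ 2 * |C ω| ^ 3)) μ :=
    (hB2C3.integrable_mul hB2 hC3).const_mul 5
  simp only [remainderWeight]
  rw [integral_add (h₁.fun_add h₂) hC5, integral_add h₁ h₂, integral_const_mul,
    integral_const_mul, hB3C2.integral_fun_mul_eq_mul_integral hB3.1 hC2.1,
    hB2C3.integral_fun_mul_eq_mul_integral hB2.1 hC3.1]
  ring

theorem abs_integral_hAdam_remainder_mul_le {A : Ω → ℝ} {ε : ℝ} (hε : 0 ≤ ε)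
    (hA_BC : IndepFun A (fun ω ↦ (B ω, C ω)) μ) (hApos : ∀ᵐ ω ∂μ, 0 < A ω)
    (hA'' : Integrable (fun ω ↦ hAdam'' ε (A ω)) μ) :
    |∫ ω, hAdam ε (A ω + (B ω + C ω) ^ 2) * C ω - hAdam ε (A ω + B ω ^ 2) * C ω
        - hAdam' ε (A ω) * (((B ω + C ω) ^ 2 - B ω ^ 2) * C ω) ∂μ|
      ≤ (∫ ω, hAdam'' ε (A ω) ∂μ)
          * (2 * (∫ ω, |B ω| ^ 3 ∂μ) * (∫ ω, C ω ^ 2 ∂μ)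
            + 5 * (∫ ω, B ω ^ 2 ∂μ) * (∫ ω, |C ω| ^ 3 ∂μ) + ∫ ω, |C ω| ^ 5 ∂μ) := by
  have hW : IndepFun (fun ω ↦ hAdam'' ε (A ω)) (fun ω ↦ remainderWeight (B ω) (C ω)) μ :=
    hA_BC.comp (measurable_hAdam'' ε) measurable_remainderWeight
  have hW_int := integrable_remainderWeight hBC hB3 hC2 hB2 hC3 hC5
  have hA''W_int : Integrable (fun ω ↦ hAdam'' ε (A ω) * remainderWeight (B ω) (C ω)) μ :=
    hW.integrable_mul hA'' hW_int
  rw [← integral_remainderWeight hBC hB3 hC2 hB2 hC3 hC5,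
    ← hW.integral_fun_mul_eq_mul_integral hA''.1 hW_int.1, ← Real.norm_eq_abs]
  refine norm_integral_le_of_norm_le hA''W_int ?_
  filter_upwards [hApos] with ω hω
  exact abs_hAdam_remainder_mul_le hε hω (B ω) (C ω)

end Moments

theorem stmt7_taylor_lemma_general
    {Ω : Type*} [MeasurableSpace Ω] (μ : Measure Ω) [IsProbabilityMeasure μ]
    (ε : ℝ) (hε : 0 < ε)
    (A B C : Ω → ℝ) (hmA : Measurable A) (hmB : Measurable B) (hmC : Measurable C)
    (hindep : iIndepFun ![A, B, C] μ)
    (hApos : ∀ᵐ ω ∂μ, 0 < A ω)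
    (hEB : ∫ ω, B ω ∂μ = 0) (hEC : ∫ ω, C ω ∂μ = 0)
    (hI0 : Integrable (fun ω => hAdam ε (A ω + (B ω + C ω) ^ 2) * C ω) μ)
    (hI1 : Integrable (fun ω => hAdam' ε (A ω)) μ)
    (hI2 : Integrable (fun ω => hAdam'' ε (A ω)) μ)
    (hI3 : Integrable (fun ω => |B ω| ^ 3) μ)
    (hI4 : Integrable (fun ω => (C ω) ^ 2) μ)
    (hI5 : Integrable (fun ω => (B ω) ^ 2) μ)
    (hI6 : Integrable (fun ω => |C ω| ^ 3) μ)
    (hI7 : Integrable (fun ω => |C ω| ^ 5) μ)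
    (hI8 : Integrable (fun ω => (C ω) ^ 3) μ) :
    |(∫ ω, hAdam ε (A ω + (B ω + C ω) ^ 2) * C ω ∂μ)
        - (∫ ω, hAdam' ε (A ω) ∂μ) * ∫ ω, (C ω) ^ 3 ∂μ|
      ≤ (∫ ω, hAdam'' ε (A ω) ∂μ)
          * (2 * (∫ ω, |B ω| ^ 3 ∂μ) * (∫ ω, (C ω) ^ 2 ∂μ)
            + 5 * (∫ ω, (B ω) ^ 2 ∂μ) * (∫ ω, |C ω| ^ 3 ∂μ)
            + ∫ ω, |C ω| ^ 5 ∂μ) := by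
  obtain ⟨hA_BC, hAB_C, hB_C⟩ := hindep.indepFun_prodMk_three hmA hmB hmC
  obtain ⟨hY, hEY⟩ :=
    integrable_and_integral_sq_add_sub_sq_mul hB_C hmB.aestronglyMeasurable hEB hI5 hI4 hI8
  have hA'_Y : IndepFun (fun ω ↦ hAdam' ε (A ω))
      (fun ω ↦ ((B ω + C ω) ^ 2 - B ω ^ 2) * C ω) μ :=
    hA_BC.comp (measurable_hAdam' ε)
      (show Measurable fun p : ℝ × ℝ ↦ ((p.1 + p.2) ^ 2 - p.1 ^ 2) * p.2 by fun_prop)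
  have hA'_Y_int : Integrable
      (fun ω ↦ hAdam' ε (A ω) * (((B ω + C ω) ^ 2 - B ω ^ 2) * C ω)) μ :=
    hA'_Y.integrable_mul hI1 hY
  have hAB : Measurable fun p : ℝ × ℝ ↦ hAdam ε (p.1 + p.2 ^ 2) :=
    (continuous_hAdam hε).measurable.comp (by fun_prop)
  have hAB_C' : IndepFun (fun ω ↦ hAdam ε (A ω + B ω ^ 2)) C μ := hAB_C.comp hAB measurable_id
  have hAB_C_int : Integrable (fun ω ↦ hAdam ε (A ω + B ω ^ 2) * C ω) μ :=
    (((memLp_two_iff_integrable_sq hmC.aestronglyMeasurable).2 hI4).integrable one_le_two).bdd_mul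
      (hAB.comp (hmA.prodMk hmB)).aestronglyMeasurable (ae_of_all _ fun _ ↦ abs_hAdam_le hε _)
  refine Eq.trans_le ?_ (abs_integral_hAdam_remainder_mul_le hB_C hI3 hI4 hI5 hI6 hI7
    hε.le hA_BC hApos hI2)
  rw [integral_sub (hI0.sub' hAB_C_int) hA'_Y_int, integral_sub hI0 hAB_C_int,
    hAB_C'.integral_fun_mul_eq_mul_integral (hAB.comp (hmA.prodMk hmB)).aestronglyMeasurable
      hmC.aestronglyMeasurable,
    hA'_Y.integral_fun_mul_eq_mul_integral hI1.1 hY.1, hEC, hEY, mul_zero, sub_zero]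

/-- for independent real random variables `A, B, C` with `A > 0` a.s.,
`E[|h'(A)|] < ∞`, `E[B] = E[C] = 0` and all expectations below finite,
`|E[h(A+(B+C)²) C] − E[h'(A)] E[C³]| ≤ E[h''(A)] (2E[|B|³]E[C²] + 5E[B²]E[|C|³] + E[|C|⁵])`. -/
theorem stmt7_taylor_lemma
    {Ω : Type*} [MeasurableSpace Ω] (μ : Measure Ω) [IsProbabilityMeasure μ]
    (ε : ℝ) (hε : 0 < ε)
    (A B C : Ω → ℝ) (hmA : Measurable A) (hmB : Measurable B) (hmC : Measurable C)
    (hindep : iIndepFun ![A, B, C] μ)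
    (hApos : ∀ᵐ ω ∂μ, 0 < A ω)
    (hInt1 : Integrable (fun ω => |hAdam' ε (A ω)|) μ)
    (hEB : ∫ ω, B ω ∂μ = 0) (hEC : ∫ ω, C ω ∂μ = 0)
    (hI0 : Integrable (fun ω => hAdam ε (A ω + (B ω + C ω) ^ 2) * C ω) μ)
    (hI1 : Integrable (fun ω => hAdam' ε (A ω)) μ)
    (hI2 : Integrable (fun ω => hAdam'' ε (A ω)) μ)
    (hI3 : Integrable (fun ω => |B ω| ^ 3) μ)
    (hI4 : Integrable (fun ω => (C ω) ^ 2) μ)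
    (hI5 : Integrable (fun ω => (B ω) ^ 2) μ)
    (hI6 : Integrable (fun ω => |C ω| ^ 3) μ)
    (hI7 : Integrable (fun ω => |C ω| ^ 5) μ)
    (hI8 : Integrable (fun ω => (C ω) ^ 3) μ) :
    |(∫ ω, hAdam ε (A ω + (B ω + C ω) ^ 2) * C ω ∂μ)
        - (∫ ω, hAdam' ε (A ω) ∂μ) * ∫ ω, (C ω) ^ 3 ∂μ|
      ≤ (∫ ω, hAdam'' ε (A ω) ∂μ)
          * (2 * (∫ ω, |B ω| ^ 3 ∂μ) * (∫ ω, (C ω) ^ 2 ∂μ)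
            + 5 * (∫ ω, (B ω) ^ 2 ∂μ) * (∫ ω, |C ω| ^ 3 ∂μ)
            + ∫ ω, |C ω| ^ 5 ∂μ) :=
  stmt7_taylor_lemma_general μ ε hε A B C hmA hmB hmC hindep hApos hEB hEC hI0 hI1 hI2 hI3 hI4 hI5
    hI6 hI7 hI8
end

section
/- Let β, δ, p, q > 0 with q < β^p and β < 1, and let (Z_k)_{k∈-ℕ₀} be a sequence of independent real random variables satisfying P(Z_k² < δ) ≤ q for every k ∈ -ℕ₀. Define v(Z) = (1-β) Σ_{k∈-ℕ₀} β^{-k} Z_k². Then E[v(Z)^{-p}] ≤ (β/(1-β))^p · (1-q)/(β^p - q) · δ^{-p}. -/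
open MeasureTheory ProbabilityTheory
open scoped ENNReal

/-!
If `T` is the first index with `Z_T² ≥ δ`, then `v(Z) ≥ (1-β) β^T δ`, so with `r = β^{-p}` we get
`v(Z)^{-p} ≤ ((1-β)δ)^{-p} r^T`. Writing `r^T = 1 + (r-1) Σ_{j<T} r^j` and using independence,
`P(T > j) ≤ q^{j+1}`, hence `E[r^T] ≤ 1 + (r-1) q / (1 - r q) = (1-q) / (1 - r q)`, which is finite
because `q < β^p`.
-/

/-- For antitone `S` this is the layer-cake form of `R ^ T`, `T` the number of `n ≥ 1` with
`ω ∈ S n`. -/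
noncomputable def geomTailWeight {Ω : Type*} (R : ℝ≥0∞) (S : ℕ → Set Ω) (ω : Ω) : ℝ≥0∞ :=
  1 + (R - 1) * ∑' j, (S (j + 1)).indicator (fun _ => R ^ j) ω

section GeomTailWeight

variable {Ω : Type*} {R : ℝ≥0∞} {S : ℕ → Set Ω} {ω : Ω}

lemma pow_le_geomTailWeight (hR : 1 ≤ R) {k : ℕ} (hk : ∀ j < k, ω ∈ S (j + 1)) :
    R ^ k ≤ geomTailWeight R S ω := by
  have hsum : ∑ j ∈ Finset.range k, R ^ j
      = ∑ j ∈ Finset.range k, (S (j + 1)).indicator (fun _ => R ^ j) ω :=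
    Finset.sum_congr rfl fun j hj =>
      (Set.indicator_of_mem (hk j (Finset.mem_range.mp hj)) (fun _ => R ^ j)).symm
  calc R ^ k = 1 + (R - 1) * ∑ j ∈ Finset.range k, R ^ j := by
        conv_lhs => rw [← tsub_add_cancel_of_le hR, ← geom_sum_mul_add]
        rw [tsub_add_cancel_of_le hR]
        ring
    _ ≤ geomTailWeight R S ω := by
        rw [hsum, geomTailWeight]
        gcongr
        exact ENNReal.sum_le_tsum _

lemma geomTailWeight_eq_top (hR : 1 < R) (hω : ∀ j, ω ∈ S (j + 1)) :
    geomTailWeight R S ω = ⊤ := by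
  have hgeom : ∑' j, (S (j + 1)).indicator (fun _ => R ^ j) ω = ⊤ := by
    simp only [Set.indicator_of_mem (hω _), ENNReal.tsum_geometric,
      tsub_eq_zero_of_le hR.le, ENNReal.inv_zero]
  rw [geomTailWeight, hgeom, ENNReal.mul_top (tsub_pos_of_lt hR).ne', add_top]

lemma lintegral_geomTailWeight_le [MeasurableSpace Ω] (μ : Measure Ω) [IsProbabilityMeasure μ]
    {r q : ℝ} (hr : 1 ≤ r) (hq : 0 ≤ q) (hrq : r * q < 1) (hS : ∀ n, MeasurableSet (S n))
    (hμS : ∀ n, μ (S n) ≤ ENNReal.ofReal q ^ n) :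
    ∫⁻ ω, geomTailWeight (ENNReal.ofReal r) S ω ∂μ ≤ ENNReal.ofReal ((1 - q) / (1 - r * q)) := by
  set R := ENNReal.ofReal r
  set Q := ENNReal.ofReal q
  have hR1 : R - 1 = ENNReal.ofReal (r - 1) := by
    rw [ENNReal.ofReal_sub _ zero_le_one, ENNReal.ofReal_one]
  have hRQ : (1 - R * Q)⁻¹ = ENNReal.ofReal (1 - r * q)⁻¹ := by
    rw [← ENNReal.ofReal_mul (by linarith), ← ENNReal.ofReal_one,
      ← ENNReal.ofReal_sub _ (by positivity), ENNReal.ofReal_inv_of_pos (by linarith)]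
  have hgeom : ∑' j, R ^ j * Q ^ (j + 1) = Q * (1 - R * Q)⁻¹ := by
    simp only [pow_succ', mul_left_comm _ Q, ← mul_pow, ENNReal.tsum_mul_left,
      ENNReal.tsum_geometric]
  calc ∫⁻ ω, geomTailWeight R S ω ∂μ
      = 1 + (R - 1) * ∑' j, R ^ j * μ (S (j + 1)) := by
        simp only [geomTailWeight]
        rw [lintegral_add_left measurable_const, lintegral_const_mul' _ _ (by simp [hR1]),
          lintegral_tsum fun j => (measurable_const.indicator (hS (j + 1))).aemeasurable]
        simp only [lintegral_indicator_const (hS _), lintegral_const, measure_univ, mul_one]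
    _ ≤ 1 + (R - 1) * ∑' j, R ^ j * Q ^ (j + 1) := by
        gcongr with j
        exact hμS (j + 1)
    _ = ENNReal.ofReal ((1 - q) / (1 - r * q)) := by
        have hrq' : 1 - r * q ≠ 0 := by linarith
        rw [hgeom, hR1, hRQ, ← ENNReal.ofReal_mul hq, ← ENNReal.ofReal_mul (by linarith),
          ← ENNReal.ofReal_one, ← ENNReal.ofReal_add zero_le_one (by positivity)]
        congr 1
        field_simp
        ring

end GeomTailWeight

lemma ProbabilityTheory.iIndepFun.measure_iInter_preimage_le_pow {Ω E : Type*} [MeasurableSpace Ω]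
    [MeasurableSpace E] {μ : Measure Ω} {Z : ℕ → Ω → E} (hZ : iIndepFun Z μ) {B : Set E}
    (hB : MeasurableSet B) {Q : ℝ≥0∞} (hQ : ∀ i, μ (Z i ⁻¹' B) ≤ Q) (n : ℕ) :
    μ (⋂ i ∈ Finset.range n, Z i ⁻¹' B) ≤ Q ^ n := by
  rw [hZ.measure_inter_preimage_eq_mul _ fun _ _ => hB]
  simpa using Finset.prod_le_prod' fun i (_ : i ∈ Finset.range n) => hQ i

lemma tsum_weighted_sq_rpow_neg_le {β δ p : ℝ} (hβ0 : 0 < β) (hβ1 : β < 1) (hδ : 0 < δ)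
    (hp : 0 < p) (z : ℕ → ℝ) {k : ℕ} (hk : δ ≤ z k ^ 2) :
    (∑' i, ENNReal.ofReal ((1 - β) * β ^ i * z i ^ 2)) ^ (-p)
      ≤ ENNReal.ofReal (((1 - β) * δ) ^ (-p)) * ENNReal.ofReal (β ^ (-p)) ^ k := by
  have hβ1' : 0 < 1 - β := sub_pos.mpr hβ1
  have hterm : ENNReal.ofReal ((1 - β) * β ^ k * δ)
      ≤ ∑' i, ENNReal.ofReal ((1 - β) * β ^ i * z i ^ 2) :=
    (ENNReal.ofReal_le_ofReal (by gcongr)).trans (ENNReal.le_tsum k)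
  calc (∑' i, ENNReal.ofReal ((1 - β) * β ^ i * z i ^ 2)) ^ (-p)
      ≤ ENNReal.ofReal ((1 - β) * β ^ k * δ) ^ (-p) := by
        rw [ENNReal.rpow_neg, ENNReal.rpow_neg]
        gcongr
    _ = ENNReal.ofReal (((1 - β) * δ) ^ (-p)) * ENNReal.ofReal (β ^ (-p)) ^ k := by
        rw [ENNReal.ofReal_rpow_of_pos (by positivity), mul_right_comm,
          Real.mul_rpow (by positivity) (by positivity), ← Real.rpow_natCast,
          ← Real.rpow_mul hβ0.le, mul_comm _ (-p), Real.rpow_mul_natCast hβ0.le,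
          ENNReal.ofReal_mul (by positivity), ENNReal.ofReal_pow (by positivity)]

lemma tsum_weighted_sq_rpow_neg_le_geomTailWeight {Ω : Type*} {β δ p : ℝ} (hβ0 : 0 < β)
    (hβ1 : β < 1) (hδ : 0 < δ) (hp : 0 < p) (Z : ℕ → Ω → ℝ) (ω : Ω) :
    (∑' k, ENNReal.ofReal ((1 - β) * β ^ k * Z k ω ^ 2)) ^ (-p)
      ≤ ENNReal.ofReal (((1 - β) * δ) ^ (-p)) * geomTailWeight (ENNReal.ofReal (β ^ (-p)))
          (fun n => ⋂ i ∈ Finset.range n, Z i ⁻¹' {x | x ^ 2 < δ}) ω := by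
  have hR : 1 < ENNReal.ofReal (β ^ (-p)) := by
    simpa using Real.one_lt_rpow_of_pos_of_lt_one_of_neg hβ0 hβ1 (neg_neg_of_pos hp)
  have hmem : ∀ n, ω ∈ ⋂ i ∈ Finset.range n, Z i ⁻¹' {x | x ^ 2 < δ} ↔
      ∀ i < n, Z i ω ^ 2 < δ := by
    simp
  by_cases hall : ∀ k, Z k ω ^ 2 < δ
  · rw [geomTailWeight_eq_top hR fun j => (hmem _).mpr fun i _ => hall i,
      ENNReal.mul_top (by simp; positivity)]
    exact le_top
  push Not at hall
  refine (tsum_weighted_sq_rpow_neg_le hβ0 hβ1 hδ hp _ (Nat.find_spec hall)).trans ?_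
  gcongr
  exact pow_le_geomTailWeight hR.le fun j hj => (hmem _).mpr fun i hi =>
    not_le.mp (Nat.find_min hall (by omega))

lemma inverse_moment_constant_eq {β δ p q : ℝ} (hβ0 : 0 < β) (hβ1 : β < 1) (hδ : 0 < δ)
    (hq : q < β ^ p) :
    ((1 - β) * δ) ^ (-p) * ((1 - q) / (1 - β ^ (-p) * q))
      = (β / (1 - β)) ^ p * ((1 - q) / (β ^ p - q)) * δ ^ (-p) := by
  have hβ1' : 0 < 1 - β := sub_pos.mpr hβ1
  have hβp : 0 < β ^ p := Real.rpow_pos_of_pos hβ0 p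
  have hβq : β ^ p - q ≠ 0 := (sub_pos.mpr hq).ne'
  have h1β : (1 - β) ^ p ≠ 0 := (Real.rpow_pos_of_pos hβ1' p).ne'
  have hδp : δ ^ p ≠ 0 := (Real.rpow_pos_of_pos hδ p).ne'
  rw [Real.rpow_neg (by positivity), Real.mul_rpow hβ1'.le hδ.le, Real.rpow_neg hδ.le,
    Real.div_rpow hβ0.le hβ1'.le, Real.rpow_neg hβ0.le]
  have hden : 1 - (β ^ p)⁻¹ * q = (β ^ p - q) / β ^ p := by field_simp
  rw [hden]
  field_simp

-- Index `k : ℕ` stands for `-k`, so `β^{-k} = β^k`; `v(Z)` may be infinite, hence `ℝ≥0∞`.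
/-- inverse-moment bound for the weighted random series
`v(Z) = (1-β) Σ_{k∈-ℕ₀} β^{-k} Z_k²` (index `k : ℕ` standing for `-k`, so `β^{-k} = β^k`).
Since `v(Z)` may be infinite, it and the expectation are formulated in `ℝ≥0∞`:
`E[v(Z)^{-p}] ≤ (β/(1-β))^p (1-q)/(β^p - q) δ^{-p}`. -/
theorem stmt8_inverse_moment_bound
    {Ω : Type*} [MeasurableSpace Ω] (μ : Measure Ω) [IsProbabilityMeasure μ]
    (β δ p q : ℝ) (hβ0 : 0 < β) (hβ1 : β < 1) (hδ : 0 < δ) (hp : 0 < p)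
    (hq0 : 0 < q) (hq : q < β ^ p)
    (Z : ℕ → Ω → ℝ) (hmZ : ∀ k, Measurable (Z k))
    (hindep : iIndepFun Z μ)
    (hsmall : ∀ k : ℕ, μ {ω | (Z k ω) ^ 2 < δ} ≤ ENNReal.ofReal q) :
    (∫⁻ ω, (∑' k : ℕ, ENNReal.ofReal ((1 - β) * β ^ k * (Z k ω) ^ 2)) ^ (-p) ∂μ)
      ≤ ENNReal.ofReal ((β / (1 - β)) ^ p * ((1 - q) / (β ^ p - q)) * δ ^ (-p)) := by
  have hr : 1 < β ^ (-p) := Real.one_lt_rpow_of_pos_of_lt_one_of_neg hβ0 hβ1 (neg_neg_of_pos hp)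
  have hrq : β ^ (-p) * q < 1 := by
    rw [Real.rpow_neg hβ0.le, inv_mul_lt_iff₀ (Real.rpow_pos_of_pos hβ0 p)]
    linarith
  set r := β ^ (-p)
  have hB : MeasurableSet {x : ℝ | x ^ 2 < δ} := measurableSet_lt (by fun_prop) measurable_const
  calc _ ≤ ∫⁻ ω, ENNReal.ofReal (((1 - β) * δ) ^ (-p)) * geomTailWeight (ENNReal.ofReal r)
          (fun n => ⋂ i ∈ Finset.range n, Z i ⁻¹' {x | x ^ 2 < δ}) ω ∂μ :=
        lintegral_mono (tsum_weighted_sq_rpow_neg_le_geomTailWeight hβ0 hβ1 hδ hp Z)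
    _ ≤ ENNReal.ofReal (((1 - β) * δ) ^ (-p)) * ENNReal.ofReal ((1 - q) / (1 - r * q)) := by
        rw [lintegral_const_mul' _ _ ENNReal.ofReal_ne_top]
        gcongr
        exact lintegral_geomTailWeight_le μ hr.le hq0.le hrq
          (fun n => Finset.measurableSet_biInter _ fun i _ => hmZ i hB)
          (hindep.measure_iInter_preimage_le_pow hB hsmall)
    _ = _ := by
        rw [← ENNReal.ofReal_mul (by positivity), inverse_moment_constant_eq hβ0 hβ1 hδ hq]
end

section
/- Let 0 ≤ α < √β < 1 and ε > 0 and suppose for each i ∈ {1,...,d} the coordinates of the Adam recursion satisfy m_n = α m_{n-1} + (1-α) X_n and v_n^{(i)} = β v_{n-1}^{(i)} + (1-β)(X_n^{(i)})², with σ_n^{(i)} = 1/(√(v_n^{(i)}/(1-β^n)) + ε). Then for every n ≥ 1 and every i, the update satisfies |σ_n^{(i)} m_n^{(i)}| ≤ ((1-α)/√(1-β)) · (1 - α²/β)^{-1/2}. -/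
/-- uniform bound on the (bias-corrected) Adam update.
For a real sequence `(X_k)_{k∈ℤ}` (one fixed coordinate `i`), with the exponential moving
averages `m_n = (1-α) Σ_{j≥0} α^j X_{n-j}` and `v_n = (1-β) Σ_{j≥0} β^j X_{n-j}²` and
`σ_n = 1/(√(v_n/(1-β^n)) + ε)`, one has for every `n ≥ 1` that
`|σ_n m_n| ≤ ((1-α)/√(1-β)) (1-α²/β)^{-1/2}`. -/
theorem stmt13_update_bounded (α β ε : ℝ) (hα : 0 ≤ α) (hαβ : α < Real.sqrt β)
    (hβ : Real.sqrt β < 1) (hε : 0 < ε)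
    (X : ℤ → ℝ) (n : ℕ) (hn : 1 ≤ n)
    (hsum_m : Summable fun j : ℕ => α ^ j * X ((n : ℤ) - j))
    (hsum_v : Summable fun j : ℕ => β ^ j * (X ((n : ℤ) - j)) ^ 2)
    (m v σ : ℝ)
    (hm : m = (1 - α) * ∑' j : ℕ, α ^ j * X ((n : ℤ) - j))
    (hv : v = (1 - β) * ∑' j : ℕ, β ^ j * (X ((n : ℤ) - j)) ^ 2)
    (hσ : σ = 1 / (Real.sqrt (v / (1 - β ^ n)) + ε)) :
    |σ * m| ≤ (1 - α) / Real.sqrt (1 - β) * (1 / Real.sqrt (1 - α ^ 2 / β)) := by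
  have hβ0 : 0 < β := Real.sqrt_pos.mp (hα.trans_lt hαβ)
  have hsq : Real.sqrt β * Real.sqrt β = β := Real.mul_self_sqrt hβ0.le
  have hsβ : 0 < Real.sqrt β := hα.trans_lt hαβ
  have hβ1 : β < 1 := by nlinarith
  have hα2β : α ^ 2 < β := by nlinarith
  have hα1 : α < 1 := lt_trans hαβ hβ
  have hr0 : 0 ≤ α ^ 2 / β := by positivity
  have hr1 : α ^ 2 / β < 1 := (div_lt_one hβ0).mpr hα2β
  set B : ℝ := ∑' j : ℕ, β ^ j * (X ((n : ℤ) - j)) ^ 2 with hB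
  have hB0 : 0 ≤ B := tsum_nonneg fun j => by positivity
  have hv0 : 0 ≤ v := by rw [hv]; nlinarith
  -- geometric series for (α²/β)^j
  have hgeo : Summable fun j : ℕ => (α ^ 2 / β) ^ j := summable_geometric_of_lt_one hr0 hr1
  have hA : (∑' j : ℕ, (α ^ 2 / β) ^ j) = 1 / (1 - α ^ 2 / β) := by
    rw [tsum_geometric_of_lt_one hr0 hr1, one_div]
  -- Cauchy–Schwarz bound on the tsum
  set T : ℝ := ∑' j : ℕ, α ^ j * X ((n : ℤ) - j) with hT
  have habs : Summable fun j : ℕ => |α ^ j * X ((n : ℤ) - j)| := hsum_m.abs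
  have hCS : ∑' j : ℕ, |α ^ j * X ((n : ℤ) - j)| ≤
      Real.sqrt (1 / (1 - α ^ 2 / β)) * Real.sqrt B := by
    apply Summable.tsum_le_of_sum_le habs
    intro s
    have key : ∀ j : ℕ, |α ^ j * X ((n : ℤ) - j)| =
        (α / Real.sqrt β) ^ j * |Real.sqrt β ^ j * X ((n : ℤ) - j)| := by
      intro j
      rw [abs_mul, abs_mul, abs_pow, abs_pow, abs_of_nonneg hα,
        abs_of_nonneg hsβ.le, ← mul_assoc, ← mul_pow, div_mul_cancel₀ _ hsβ.ne']
    calc ∑ j ∈ s, |α ^ j * X ((n : ℤ) - j)|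
        = ∑ j ∈ s, (α / Real.sqrt β) ^ j * |Real.sqrt β ^ j * X ((n : ℤ) - j)| := by
          exact Finset.sum_congr rfl fun j _ => key j
      _ ≤ Real.sqrt (∑ j ∈ s, ((α / Real.sqrt β) ^ j) ^ 2) *
            Real.sqrt (∑ j ∈ s, |Real.sqrt β ^ j * X ((n : ℤ) - j)| ^ 2) :=
          Real.sum_mul_le_sqrt_mul_sqrt s _ _
      _ ≤ Real.sqrt (1 / (1 - α ^ 2 / β)) * Real.sqrt B := by
          apply mul_le_mul
          · apply Real.sqrt_le_sqrt
            rw [← hA]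
            have heq : ∀ j : ℕ, ((α / Real.sqrt β) ^ j) ^ 2 = (α ^ 2 / β) ^ j := by
              intro j; rw [← pow_mul, mul_comm j 2, pow_mul, div_pow, sq (Real.sqrt β), hsq]
            simp_rw [heq]
            exact Summable.sum_le_tsum s (fun j _ => by positivity) hgeo
          · apply Real.sqrt_le_sqrt
            have heq : ∀ j : ℕ, |Real.sqrt β ^ j * X ((n : ℤ) - j)| ^ 2 =
                β ^ j * (X ((n : ℤ) - j)) ^ 2 := by
              intro j
              rw [sq_abs, mul_pow, ← pow_mul, mul_comm j 2, pow_mul, sq (Real.sqrt β), hsq]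
            simp_rw [heq]
            exact Summable.sum_le_tsum s (fun j _ => by positivity) hsum_v
          · exact Real.sqrt_nonneg _
          · exact Real.sqrt_nonneg _
  have hTB : |T| ≤ Real.sqrt (1 / (1 - α ^ 2 / β)) * Real.sqrt B := by
    refine le_trans ?_ hCS
    simpa only [Real.norm_eq_abs] using norm_tsum_le_tsum_norm (f := fun j : ℕ => α ^ j * X ((n : ℤ) - j)) habs
  -- relate B to v
  have hβ1' : (0:ℝ) < 1 - β := by linarith
  have hBv : B = v / (1 - β) := by rw [hv]; field_simp
  have hsqrtB : Real.sqrt B = Real.sqrt v / Real.sqrt (1 - β) := by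
    rw [hBv, Real.sqrt_div hv0]
  -- bound on |m|
  have hmbound : |m| ≤ (1 - α) / Real.sqrt (1 - β) * (1 / Real.sqrt (1 - α ^ 2 / β)) *
      Real.sqrt v := by
    rw [hm, abs_mul, abs_of_nonneg (by linarith : (0:ℝ) ≤ 1 - α)]
    have h1 : Real.sqrt (1 / (1 - α ^ 2 / β)) = 1 / Real.sqrt (1 - α ^ 2 / β) := by
      rw [Real.sqrt_div' 1 (by linarith), Real.sqrt_one]
    calc (1 - α) * |T| ≤ (1 - α) * (Real.sqrt (1 / (1 - α ^ 2 / β)) * Real.sqrt B) := by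
          exact mul_le_mul_of_nonneg_left hTB (by linarith)
      _ = (1 - α) / Real.sqrt (1 - β) * (1 / Real.sqrt (1 - α ^ 2 / β)) * Real.sqrt v := by
          rw [h1, hsqrtB]; ring
  -- σ bounds
  have hβn1 : β ^ n < 1 := pow_lt_one₀ hβ0.le hβ1 (by omega)
  have hβn0 : 0 < 1 - β ^ n := by linarith
  have hβn2 : 1 - β ^ n ≤ 1 := by
    have : 0 ≤ β ^ n := by positivity
    linarith
  have hvle : v ≤ v / (1 - β ^ n) := by
    rw [le_div_iff₀ hβn0]
    nlinarith
  have hs : Real.sqrt v ≤ Real.sqrt (v / (1 - β ^ n)) := Real.sqrt_le_sqrt hvle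
  have hden : 0 < Real.sqrt (v / (1 - β ^ n)) + ε := by positivity
  have hσ0 : 0 ≤ σ := by rw [hσ]; positivity
  have hσv : σ * Real.sqrt v ≤ 1 := by
    rw [hσ, div_mul_eq_mul_div, one_mul, div_le_one hden]
    have := Real.sqrt_nonneg v
    linarith
  set C : ℝ := (1 - α) / Real.sqrt (1 - β) * (1 / Real.sqrt (1 - α ^ 2 / β)) with hC
  have hC0 : 0 ≤ C := by
    rw [hC]
    have : (0:ℝ) ≤ 1 - α := by linarith
    positivity
  calc |σ * m| = σ * |m| := by rw [abs_mul, abs_of_nonneg hσ0]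
    _ ≤ σ * (C * Real.sqrt v) := mul_le_mul_of_nonneg_left hmbound hσ0
    _ = C * (σ * Real.sqrt v) := by ring
    _ ≤ C * 1 := mul_le_mul_of_nonneg_left hσv hC0
    _ = C := mul_one C
end

section
/- Let p > 2, and let (Θ̄_n)_{n ≥ n₀} be a process with increments that can be decomposed dyadically as follows: suppose for every pair 0 ≤ k ≤ ℓ the centered increment Θ̄_{k,ℓ} := Θ̄_ℓ − Θ̄_k − E[Θ̄_ℓ − Θ̄_k] satisfies E[|Θ̄_{k,ℓ}|^p]^{2/p} ≤ κ² γ² (ℓ−k) C² for constants κ, γ, C > 0. Then for every N ≥ 0, E[max_{n=0,...,N} |Θ̄_{0,n}|^p]^{1/p} ≤ (1 − 2^{−(1/2 − 1/p)})^{−1} κ γ C √N. -/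
/-!
Centering makes `D` a coboundary, `D k ℓ = X ℓ - X k`. For `n < 2 ^ m`, rounding `n` down to
multiples of `2 ^ (m - k)`, `k = 0, …, m`, writes `[0, n)` as a union of at most one left half of
a dyadic interval of length `2 ^ (m - k)` per layer `k < m`. Hence `|D 0 n|` is at most the sum
over layers of the `ℓᵖ`-norm of the increments over all `2 ^ k` such halves, a bound that does not
depend on `n`. Minkowski's inequality bounds the `Lᵖ`-norm of the maximum by the sum of the
`Lᵖ`-norms of these layer functions, the `k`-th of which is at most
`(2 ^ k) ^ (1 / p) κγC √(2 ^ (m - 1 - k)) = κγC √(2 ^ (m - 1)) (2 ^ (-(1 / 2 - 1 / p))) ^ k`.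
Summing the geometric series and taking `m = N.size`, so that `2 ^ (m - 1) ≤ N`, gives the claim.
-/

open MeasureTheory Finset
open scoped ENNReal

lemma abs_le_sum_abs_rpow_rpow {ι : Type*} {s : Finset ι} {f : ι → ℝ} {i : ι} (hi : i ∈ s)
    {p : ℝ} (hp : 0 < p) : |f i| ≤ (∑ j ∈ s, |f j| ^ p) ^ (1 / p) := by
  calc |f i| = (|f i| ^ p) ^ (1 / p) := by
        rw [← Real.rpow_mul (abs_nonneg _), mul_one_div_cancel hp.ne', Real.rpow_one]
    _ ≤ _ := by
      gcongr
      exact single_le_sum (f := fun j => |f j| ^ p) (fun j _ => by positivity) hi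

lemma abs_sum_abs_rpow_rpow_one_div_rpow {ι : Type*} {s : Finset ι} {g : ι → ℝ} {p : ℝ}
    (hp : p ≠ 0) :
    |(∑ i ∈ s, |g i| ^ p) ^ (1 / p)| ^ p = ∑ i ∈ s, |g i| ^ p := by
  have hsum : 0 ≤ ∑ i ∈ s, |g i| ^ p := sum_nonneg fun _ _ => by positivity
  rw [abs_of_nonneg (by positivity), one_div, Real.rpow_inv_rpow hsum hp]

lemma le_rpow_of_rpow_two_div_le_sq {a c p : ℝ} (ha : 0 ≤ a) (hc : 0 ≤ c) (hp : 0 < p)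
    (h : a ^ (2 / p) ≤ c ^ 2) : a ≤ c ^ p := by
  rw [show 2 / p = (p / 2)⁻¹ by rw [inv_div], Real.rpow_inv_le_iff_of_pos ha (by positivity)
    (by positivity), ← Real.rpow_natCast, ← Real.rpow_mul hc] at h
  rwa [Nat.cast_ofNat, mul_div_cancel₀ p two_ne_zero] at h

lemma two_pow_mul_div_two_pow_eq_or (n j : ℕ) :
    2 ^ j * (n / 2 ^ j) = 2 ^ (j + 1) * (n / 2 ^ (j + 1)) ∨
      2 ^ j * (n / 2 ^ j) = 2 ^ (j + 1) * (n / 2 ^ (j + 1)) + 2 ^ j := by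
  have key : 2 ^ j * (n / 2 ^ j) = 2 ^ (j + 1) * (n / 2 ^ (j + 1)) + 2 ^ j * (n / 2 ^ j % 2) := by
    rw [pow_succ, ← Nat.div_div_eq_div_mul]
    conv_lhs => rw [← Nat.div_add_mod (n / 2 ^ j) 2]
    ring
  rcases Nat.mod_two_eq_zero_or_one (n / 2 ^ j) with h | h <;> simp [key, h]

/-- Layer `k` (the paper's layer `k + 1`) consists of the left halves of the `2 ^ k` dyadic
intervals of length `2 ^ (m - k)` in `[0, 2 ^ m)`. -/
noncomputable def dyadicLayerNorm (p : ℝ) (m k : ℕ) (Y : ℕ → ℕ → ℝ) : ℝ :=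
  (∑ t ∈ range (2 ^ k), |Y (t * 2 ^ (m - k)) (t * 2 ^ (m - k) + 2 ^ (m - 1 - k))| ^ p) ^ (1 / p)

lemma abs_le_sum_dyadicLayerNorm {Y : ℕ → ℕ → ℝ} {X : ℕ → ℝ} (hY : ∀ a b, Y a b = X b - X a)
    {p : ℝ} (hp : 0 < p) {m n : ℕ} (hn : n < 2 ^ m) :
    |Y 0 n| ≤ ∑ k ∈ range m, dyadicLayerNorm p m k Y := by
  obtain rfl : Y = fun a b => X b - X a := funext₂ hY
  set e : ℕ → ℕ := fun k => 2 ^ (m - k) * (n / 2 ^ (m - k))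
  have he0 : e 0 = 0 := by simp [e, Nat.div_eq_of_lt hn]
  have hem : e m = n := by simp [e]
  calc |X n - X 0| = |∑ k ∈ range m, (X (e (k + 1)) - X (e k))| := by
        rw [sum_range_sub (fun k => X (e k)), he0, hem]
    _ ≤ ∑ k ∈ range m, |X (e (k + 1)) - X (e k)| := abs_sum_le_sum_abs _ _
    _ ≤ _ := sum_le_sum fun k hk => ?_
  have hk : k < m := mem_range.mp hk
  have hmk : m - k = m - 1 - k + 1 := by omega
  have ht : n / 2 ^ (m - k) < 2 ^ k := by
    rw [Nat.div_lt_iff_lt_mul (by positivity), ← pow_add, Nat.add_sub_cancel' hk.le]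
    exact hn
  have hek : e k = n / 2 ^ (m - k) * 2 ^ (m - k) := mul_comm _ _
  rcases two_pow_mul_div_two_pow_eq_or n (m - 1 - k) with h | h
  · have : e (k + 1) = e k := by simp only [e, ← hmk, show m - (k + 1) = m - 1 - k by omega, h]
    rw [this, sub_self, abs_zero]
    exact Real.rpow_nonneg (sum_nonneg fun _ _ => by positivity) _
  · have : e (k + 1) = e k + 2 ^ (m - 1 - k) := by
      simp only [e, ← hmk, show m - (k + 1) = m - 1 - k by omega, h]
    rw [this, hek]
    exact abs_le_sum_abs_rpow_rpow
      (f := fun t => X (t * 2 ^ (m - k) + 2 ^ (m - 1 - k)) - X (t * 2 ^ (m - k)))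
      (mem_range.mpr ht) hp

lemma iSup_abs_le_sum_dyadicLayerNorm {Y : ℕ → ℕ → ℝ} {X : ℕ → ℝ}
    (hY : ∀ a b, Y a b = X b - X a) {p : ℝ} (hp : 0 < p) {m N : ℕ} (hN : N < 2 ^ m) :
    ⨆ n ∈ range (N + 1), |Y 0 n| ≤ ∑ k ∈ range m, dyadicLayerNorm p m k Y := by
  have hle : ∀ n ∈ range (N + 1), |Y 0 n| ≤ ∑ k ∈ range m, dyadicLayerNorm p m k Y :=
    fun n hn => abs_le_sum_dyadicLayerNorm hY hp ((mem_range_succ_iff.mp hn).trans_lt hN)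
  have hnonneg := (abs_nonneg _).trans (hle 0 (by simp))
  exact Real.iSup_le (fun n => Real.iSup_le (hle n) hnonneg) hnonneg

lemma two_rpow_neg_half_sub_inv_lt_one {p : ℝ} (hp : 2 < p) :
    (2 : ℝ) ^ (-(1 / 2 - 1 / p)) < 1 := by
  refine Real.rpow_lt_one_of_one_lt_of_neg one_lt_two ?_
  have : 1 / p < 1 / 2 := one_div_lt_one_div_of_lt two_pos hp
  linarith

lemma sum_rpow_mul_sqrt_le {p : ℝ} (hp : 2 < p) (m : ℕ) :
    ∑ k ∈ range m, ((2 : ℝ) ^ k) ^ (1 / p) * √(2 ^ (m - 1 - k))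
      ≤ (1 - (2 : ℝ) ^ (-(1 / 2 - 1 / p)))⁻¹ * √(2 ^ (m - 1)) := by
  set s : ℝ := (2 : ℝ) ^ (-(1 / 2 - 1 / p))
  have hs0 : 0 ≤ s := by positivity
  have hs1 : s < 1 := two_rpow_neg_half_sub_inv_lt_one hp
  have hterm : ∀ k ∈ range m, ((2 : ℝ) ^ k) ^ (1 / p) * √(2 ^ (m - 1 - k))
      = √(2 ^ (m - 1)) * s ^ k := by
    intro k hk
    have hsplit : (2 : ℝ) ^ (m - 1) = 2 ^ (m - 1 - k) * 2 ^ k := by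
      rw [← pow_add]; congr 1; have := mem_range.mp hk; omega
    have hsk : s ^ k = ((2 : ℝ) ^ k) ^ (-(1 / 2 - 1 / p)) := by
      rw [← Real.rpow_natCast, ← Real.rpow_mul zero_le_two, mul_comm, Real.rpow_mul zero_le_two,
        Real.rpow_natCast]
    rw [hsplit, Real.sqrt_mul (by positivity), hsk, mul_assoc, Real.sqrt_eq_rpow (2 ^ k),
      ← Real.rpow_add (by positivity)]
    ring_nf
  calc ∑ k ∈ range m, ((2 : ℝ) ^ k) ^ (1 / p) * √(2 ^ (m - 1 - k))
      = √(2 ^ (m - 1)) * ∑ k ∈ range m, s ^ k := by rw [sum_congr rfl hterm, mul_sum]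
    _ ≤ √(2 ^ (m - 1)) * (1 - s)⁻¹ := by
      refine mul_le_mul_of_nonneg_left ?_ (Real.sqrt_nonneg _)
      simpa [← range_eq_Ico] using geom_sum_Ico_le_of_lt_one (m := 0) (n := m) hs0 hs1
    _ = (1 - s)⁻¹ * √(2 ^ (m - 1)) := mul_comm _ _

lemma sum_rpow_mul_sqrt_size_le {p : ℝ} (hp : 2 < p) (N : ℕ) :
    ∑ k ∈ range N.size, ((2 : ℝ) ^ k) ^ (1 / p) * √(2 ^ (N.size - 1 - k))
      ≤ (1 - (2 : ℝ) ^ (-(1 / 2 - 1 / p)))⁻¹ * √N := by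
  rcases Nat.eq_zero_or_pos N with rfl | hN
  · simp
  refine (sum_rpow_mul_sqrt_le hp _).trans ?_
  have : 2 ^ (N.size - 1) ≤ N := Nat.lt_size.mp (Nat.sub_lt (Nat.size_pos.mpr hN) one_pos)
  gcongr
  · exact inv_nonneg.mpr (sub_nonneg.mpr (two_rpow_neg_half_sub_inv_lt_one hp).le)
  · exact_mod_cast this

section Lp

variable {Ω : Type*} [MeasurableSpace Ω] {μ : Measure Ω} {p : ℝ}

lemma memLp_ofReal_of_integrable_abs_rpow {f : Ω → ℝ} (hp : 0 < p)
    (hf : AEStronglyMeasurable f μ) (hint : Integrable (fun ω => |f ω| ^ p) μ) :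
    MemLp f (ENNReal.ofReal p) μ := by
  rw [← integrable_norm_rpow_iff hf (by simpa using hp) ENNReal.ofReal_ne_top,
    ENNReal.toReal_ofReal hp.le]
  simpa only [Real.norm_eq_abs] using hint

lemma lpNorm_ofReal_eq {f : Ω → ℝ} (hp : 0 < p) (hf : AEStronglyMeasurable f μ) :
    lpNorm f (ENNReal.ofReal p) μ = (∫ ω, |f ω| ^ p ∂μ) ^ (1 / p) := by
  rw [lpNorm_eq_integral_norm_rpow_toReal (by simpa using hp) ENNReal.ofReal_ne_top hf,
    ENNReal.toReal_ofReal hp.le, one_div]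
  simp only [Real.norm_eq_abs]

lemma lpNorm_le_sum_of_abs_le_sum {ι : Type*} {s : Finset ι} {F : Ω → ℝ} {G : ι → Ω → ℝ}
    {q : ℝ≥0∞} (hq : 1 ≤ q) (hG : ∀ i ∈ s, MemLp (G i) q μ)
    (hFG : ∀ ω, |F ω| ≤ ∑ i ∈ s, G i ω) :
    lpNorm F q μ ≤ ∑ i ∈ s, lpNorm (G i) q μ :=
  calc lpNorm F q μ ≤ lpNorm (∑ i ∈ s, G i) q μ :=
        lpNorm_mono_real (memLp_finsetSum' s hG) (by simpa using hFG)
    _ ≤ _ := lpNorm_sum_le hG hq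

variable {ι : Type*} (s : Finset ι) {f : ι → Ω → ℝ}

lemma memLp_sum_abs_rpow_rpow (hp : 0 < p) (hf : ∀ i ∈ s, AEStronglyMeasurable (f i) μ)
    (hint : ∀ i ∈ s, Integrable (fun ω => |f i ω| ^ p) μ) :
    MemLp (fun ω => (∑ i ∈ s, |f i ω| ^ p) ^ (1 / p)) (ENNReal.ofReal p) μ := by
  refine memLp_ofReal_of_integrable_abs_rpow hp ?_ ?_
  · refine (AEMeasurable.pow_const ?_ _).aestronglyMeasurable
    exact Finset.aemeasurable_fun_sum _ fun i hi => (hf i hi).aemeasurable.abs.pow_const _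
  · simp_rw [abs_sum_abs_rpow_rpow_one_div_rpow hp.ne']
    exact integrable_finsetSum s hint

lemma lpNorm_sum_abs_rpow_rpow_le (hp : 0 < p) (hf : ∀ i ∈ s, AEStronglyMeasurable (f i) μ)
    (hint : ∀ i ∈ s, Integrable (fun ω => |f i ω| ^ p) μ) {b : ℝ} (hb : 0 ≤ b)
    (hfb : ∀ i ∈ s, ∫ ω, |f i ω| ^ p ∂μ ≤ b ^ p) :
    lpNorm (fun ω => (∑ i ∈ s, |f i ω| ^ p) ^ (1 / p)) (ENNReal.ofReal p) μ
      ≤ (#s : ℝ) ^ (1 / p) * b := by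
  rw [lpNorm_ofReal_eq hp (memLp_sum_abs_rpow_rpow s hp hf hint).aestronglyMeasurable]
  simp_rw [abs_sum_abs_rpow_rpow_one_div_rpow hp.ne']
  rw [integral_finsetSum s hint]
  calc (∑ i ∈ s, ∫ ω, |f i ω| ^ p ∂μ) ^ (1 / p) ≤ (#s * b ^ p) ^ (1 / p) := by
        gcongr
        simpa using sum_le_sum hfb
    _ = (#s : ℝ) ^ (1 / p) * b := by
        rw [Real.mul_rpow (by positivity) (by positivity), ← Real.rpow_mul hb,
          mul_one_div_cancel hp.ne', Real.rpow_one]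

lemma memLp_dyadicLayerNorm {D : ℕ → ℕ → Ω → ℝ} (hp : 0 < p)
    (hDm : ∀ a b, AEStronglyMeasurable (D a b) μ)
    (hDint : ∀ a b, Integrable (fun ω => |D a b ω| ^ p) μ) (m k : ℕ) :
    MemLp (fun ω => dyadicLayerNorm p m k (fun a b => D a b ω)) (ENNReal.ofReal p) μ :=
  memLp_sum_abs_rpow_rpow _ hp (fun _ _ => hDm _ _) (fun _ _ => hDint _ _)

lemma lpNorm_dyadicLayerNorm_le {D : ℕ → ℕ → Ω → ℝ} (hp : 0 < p)
    (hDm : ∀ a b, AEStronglyMeasurable (D a b) μ)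
    (hDint : ∀ a b, Integrable (fun ω => |D a b ω| ^ p) μ) {c : ℝ} (hc : 0 ≤ c)
    (hmom : ∀ a b, a ≤ b → ∫ ω, |D a b ω| ^ p ∂μ ≤ (c * √((b : ℝ) - a)) ^ p) (m k : ℕ) :
    lpNorm (fun ω => dyadicLayerNorm p m k (fun a b => D a b ω)) (ENNReal.ofReal p) μ
      ≤ c * (((2 : ℝ) ^ k) ^ (1 / p) * √(2 ^ (m - 1 - k))) := by
  refine (lpNorm_sum_abs_rpow_rpow_le (range (2 ^ k)) hp (fun _ _ => hDm _ _)
    (fun _ _ => hDint _ _) (b := c * √(2 ^ (m - 1 - k))) (by positivity)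
    fun t _ => ?_).trans_eq ?_
  · refine (hmom _ _ (Nat.le_add_right _ _)).trans_eq ?_
    push_cast
    rw [add_sub_cancel_left]
  · simp only [card_range, Nat.cast_pow, Nat.cast_ofNat]
    ring

theorem lpNorm_iSup_abs_le_of_dyadic_moments {D : ℕ → ℕ → Ω → ℝ} {X : ℕ → Ω → ℝ} (hp : 2 < p)
    (hDX : ∀ ω a b, D a b ω = X b ω - X a ω) (hDm : ∀ a b, AEStronglyMeasurable (D a b) μ)
    (hDint : ∀ a b, Integrable (fun ω => |D a b ω| ^ p) μ) {c : ℝ} (hc : 0 ≤ c)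
    (hmom : ∀ a b, a ≤ b → ∫ ω, |D a b ω| ^ p ∂μ ≤ (c * √((b : ℝ) - a)) ^ p) (N : ℕ) :
    lpNorm (fun ω => ⨆ n ∈ range (N + 1), |D 0 n ω|) (ENNReal.ofReal p) μ
      ≤ c * ((1 - (2 : ℝ) ^ (-(1 / 2 - 1 / p)))⁻¹ * √N) := by
  have hp0 : 0 < p := by linarith
  have hmax : ∀ ω, |(⨆ n ∈ range (N + 1), |D 0 n ω|)|
      ≤ ∑ k ∈ range N.size, dyadicLayerNorm p N.size k (fun a b => D a b ω) := fun ω => by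
    rw [abs_of_nonneg (Real.iSup_nonneg fun n => Real.iSup_nonneg fun _ => abs_nonneg _)]
    exact iSup_abs_le_sum_dyadicLayerNorm (hDX ω) hp0 N.lt_size_self
  calc lpNorm (fun ω => ⨆ n ∈ range (N + 1), |D 0 n ω|) (ENNReal.ofReal p) μ
      ≤ ∑ k ∈ range N.size,
          lpNorm (fun ω => dyadicLayerNorm p N.size k (fun a b => D a b ω)) (ENNReal.ofReal p) μ :=
        lpNorm_le_sum_of_abs_le_sum (ENNReal.one_le_ofReal.mpr (by linarith))
          (fun k _ => memLp_dyadicLayerNorm hp0 hDm hDint _ k) hmax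
    _ ≤ ∑ k ∈ range N.size, c * (((2 : ℝ) ^ k) ^ (1 / p) * √(2 ^ (N.size - 1 - k))) :=
        sum_le_sum fun k _ => lpNorm_dyadicLayerNorm_le hp0 hDm hDint hc hmom _ k
    _ ≤ c * ((1 - (2 : ℝ) ^ (-(1 / 2 - 1 / p)))⁻¹ * √N) := by
        rw [← mul_sum]
        exact mul_le_mul_of_nonneg_left (sum_rpow_mul_sqrt_size_le hp N) hc

end Lp

theorem stmt15_dyadic_chaining_general
    {Ω : Type*} [MeasurableSpace Ω] (μ : Measure Ω) [IsProbabilityMeasure μ]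
    (p κ γ C : ℝ) (hp : 2 < p) (hκ : 0 < κ) (hγ : 0 < γ) (hC : 0 < C)
    (Θ : ℕ → Ω → ℝ) (hint : ∀ n, Integrable (Θ n) μ)
    (D : ℕ → ℕ → Ω → ℝ)
    (hD : ∀ k ℓ : ℕ, ∀ ω : Ω,
      D k ℓ ω = Θ ℓ ω - Θ k ω - ∫ ω', (Θ ℓ ω' - Θ k ω') ∂μ)
    (hDint : ∀ k ℓ : ℕ, Integrable (fun ω => |D k ℓ ω| ^ p) μ)
    (hbound : ∀ k ℓ : ℕ, k ≤ ℓ →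
      (∫ ω, |D k ℓ ω| ^ p ∂μ) ^ (2 / p) ≤ κ ^ 2 * γ ^ 2 * ((ℓ : ℝ) - k) * C ^ 2)
    (N : ℕ) :
    (∫ ω, (⨆ n ∈ Finset.range (N + 1), |D 0 n ω|) ^ p ∂μ) ^ (1 / p)
      ≤ (1 - (2 : ℝ) ^ (-(1 / 2 - 1 / p)))⁻¹ * κ * γ * C * Real.sqrt N := by
  have hp0 : 0 < p := by linarith
  have hDm : ∀ k ℓ, AEStronglyMeasurable (D k ℓ) μ := fun k ℓ => by
    rw [funext (hD k ℓ)]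
    exact ((hint ℓ).sub (hint k)).aestronglyMeasurable.sub aestronglyMeasurable_const
  have hcocycle : ∀ ω k ℓ, D k ℓ ω = (Θ ℓ ω - ∫ ω', Θ ℓ ω' ∂μ) - (Θ k ω - ∫ ω', Θ k ω' ∂μ) := by
    intro ω k ℓ
    rw [hD, integral_sub (hint ℓ) (hint k)]
    ring
  have hmom : ∀ k ℓ : ℕ, k ≤ ℓ → ∫ ω, |D k ℓ ω| ^ p ∂μ ≤ (κ * γ * C * √((ℓ : ℝ) - k)) ^ p := by
    intro k ℓ hkℓ
    refine le_rpow_of_rpow_two_div_le_sq (integral_nonneg fun _ => by positivity)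
      (by positivity) hp0 ((hbound k ℓ hkℓ).trans_eq ?_)
    rw [mul_pow, mul_pow, mul_pow, Real.sq_sqrt (sub_nonneg.mpr (by exact_mod_cast hkℓ))]
    ring
  have hmaxm : AEStronglyMeasurable (fun ω => ⨆ n ∈ range (N + 1), |D 0 n ω|) μ :=
    (AEMeasurable.iSup fun n => AEMeasurable.iSup fun _ =>
      (hDm 0 n).aemeasurable.abs).aestronglyMeasurable
  calc (∫ ω, (⨆ n ∈ range (N + 1), |D 0 n ω|) ^ p ∂μ) ^ (1 / p)
      = lpNorm (fun ω => ⨆ n ∈ range (N + 1), |D 0 n ω|) (ENNReal.ofReal p) μ := by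
        rw [lpNorm_ofReal_eq hp0 hmaxm]
        simp_rw [abs_of_nonneg (Real.iSup_nonneg fun n => Real.iSup_nonneg fun _ => abs_nonneg _)]
    _ ≤ κ * γ * C * ((1 - (2 : ℝ) ^ (-(1 / 2 - 1 / p)))⁻¹ * √N) :=
        lpNorm_iSup_abs_le_of_dyadic_moments hp hcocycle hDm hDint (by positivity) hmom N
    _ = _ := by ring

/-- dyadic chaining bound. For a process `Θ` whose centered increments
`D k ℓ := Θ ℓ − Θ k − E[Θ ℓ − Θ k]` satisfy `E[|D k ℓ|^p]^{2/p} ≤ κ²γ²(ℓ−k)C²` for all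
`k ≤ ℓ`, one has `E[max_{n≤N} |D 0 n|^p]^{1/p} ≤ (1 − 2^{−(1/2−1/p)})⁻¹ κ γ C √N`. -/
theorem stmt15_dyadic_chaining
    {Ω : Type*} [MeasurableSpace Ω] (μ : Measure Ω) [IsProbabilityMeasure μ]
    (p κ γ C : ℝ) (hp : 2 < p) (hκ : 0 < κ) (hγ : 0 < γ) (hC : 0 < C)
    (Θ : ℕ → Ω → ℝ) (hint : ∀ n, Integrable (Θ n) μ)
    (D : ℕ → ℕ → Ω → ℝ)
    (hD : ∀ k ℓ : ℕ, ∀ ω : Ω,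
      D k ℓ ω = Θ ℓ ω - Θ k ω - ∫ ω', (Θ ℓ ω' - Θ k ω') ∂μ)
    (hDint : ∀ k ℓ : ℕ, Integrable (fun ω => |D k ℓ ω| ^ p) μ)
    (hbound : ∀ k ℓ : ℕ, k ≤ ℓ →
      (∫ ω, |D k ℓ ω| ^ p ∂μ) ^ (2 / p) ≤ κ ^ 2 * γ ^ 2 * ((ℓ : ℝ) - k) * C ^ 2)
    (N : ℕ)
    (hmaxint : Integrable
      (fun ω => (⨆ n ∈ Finset.range (N + 1), |D 0 n ω|) ^ p) μ) :
    (∫ ω, (⨆ n ∈ Finset.range (N + 1), |D 0 n ω|) ^ p ∂μ) ^ (1 / p)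
      ≤ (1 - (2 : ℝ) ^ (-(1 / 2 - 1 / p)))⁻¹ * κ * γ * C * Real.sqrt N :=
  stmt15_dyadic_chaining_general μ p κ γ C hp hκ hγ hC Θ hint D hD hDint hbound N
end

section
/- Let c, δ, γ₀ > 0 with (1/2)γ₀^{-1} log β^{-1} − 2c ≥ δ γ₀^{-1} for some β ∈ (0,1), let ρ > 0, and let n₀ ≤ n₁ ≤ n₂ ≤ ... be integers with associated times t_{n₀} ≤ t_{n₁} ≤ ... satisfying t_{n_r} − t_{n_{r-1}} ≤ ρ√γ₀ for all r ≥ 1 and n_{r-1} − n₀ ≥ (t_{n_{r-1}} − t_{n₀})/γ₀. Then for every ℓ ≥ 1: Σ_{r=1}^ℓ e^{−2c(t_{n_ℓ} − t_{n_r})} β^{(n_{r-1} − n₀)/2} (t_{n_r} − t_{n_{r-1}}) ≤ e^{2cρ√γ₀} (ρ√γ₀ + δ^{-1}γ₀) e^{−2c(t_{n_ℓ} − t_{n₀})}. -/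
/-!
With `a = δγ₀⁻¹`, the index gap and the margin give
`β^{(n_{r-1}-n₀)/2} ≤ e^{-(2c+a)(t_{n_{r-1}}-t_{n₀})}`. The factor `e^{-2c(·)}` recombines with
`e^{-2c(t_{n_ℓ}-t_{n_r})}` into `e^{-2c(t_{n_ℓ}-t_{n₀})}`, at the price of `e^{2cρ√γ₀}` for the
one step `t_{n_r}-t_{n_{r-1}}`. What remains is a left Riemann sum of `s ↦ e^{-as}` with mesh at
most `ρ√γ₀`; since `d ≤ (a⁻¹ + d)(1 - e^{-ad})` (that is, `1 + ad ≤ e^{ad}`), each of its terms is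
at most `a⁻¹ + ρ√γ₀` times the decrease of `e^{-as}` over its step, and the sum telescopes.
-/

open Real Finset

theorem Finset.sum_Icc_pred_sub {M : Type*} [AddCommGroup M] (f : ℕ → M) (ℓ : ℕ) :
    ∑ r ∈ Icc 1 ℓ, (f (r - 1) - f r) = f 0 - f ℓ := by
  rw [← Ico_add_one_right_eq_Icc, sum_Ico_eq_sum_range]
  simpa [add_comm 1] using sum_range_sub' f ℓ

theorem Real.le_inv_add_mul_one_sub_exp {a : ℝ} (ha : 0 < a) (d : ℝ) :
    d ≤ (a⁻¹ + d) * (1 - exp (-a * d)) := by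
  have hexp : (1 + a * d) * exp (-a * d) ≤ 1 := by
    have := add_one_le_exp (a * d)
    rw [neg_mul, exp_neg, ← div_eq_mul_inv, div_le_one (exp_pos _)]
    linarith
  have hsplit : (a⁻¹ + d) * (1 - exp (-a * d))
      = a⁻¹ * ((1 + a * d) - (1 + a * d) * exp (-a * d)) := by
    field_simp
  rw [hsplit, le_inv_mul_iff₀ ha]
  linarith

theorem Real.exp_neg_mul_mul_sub_le {a x y : ℝ} (ha : 0 < a) :
    exp (-a * x) * (y - x) ≤ (a⁻¹ + (y - x)) * (exp (-a * x) - exp (-a * y)) := by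
  have hy : exp (-a * y) = exp (-a * x) * exp (-a * (y - x)) := by
    rw [← exp_add]; ring_nf
  calc exp (-a * x) * (y - x)
      ≤ exp (-a * x) * ((a⁻¹ + (y - x)) * (1 - exp (-a * (y - x)))) :=
        mul_le_mul_of_nonneg_left (le_inv_add_mul_one_sub_exp ha _) (exp_pos _).le
    _ = (a⁻¹ + (y - x)) * (exp (-a * x) - exp (-a * y)) := by rw [hy]; ring

theorem Real.sum_exp_neg_mul_mul_sub_le {a h : ℝ} {T : ℕ → ℝ} {ℓ : ℕ} (ha : 0 < a)
    (hh : 0 ≤ h) (hT : Monotone T) (hstep : ∀ r ∈ Icc 1 ℓ, T r - T (r - 1) ≤ h) :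
    ∑ r ∈ Icc 1 ℓ, exp (-a * (T (r - 1) - T 0)) * (T r - T (r - 1)) ≤ a⁻¹ + h := by
  set g : ℕ → ℝ := fun r ↦ exp (-a * (T r - T 0))
  have hterm : ∀ r ∈ Icc 1 ℓ,
      exp (-a * (T (r - 1) - T 0)) * (T r - T (r - 1)) ≤ (a⁻¹ + h) * (g (r - 1) - g r) := by
    intro r hr
    have hle : T (r - 1) ≤ T r := hT (Nat.sub_le r 1)
    have hdecr : g r ≤ g (r - 1) :=
      exp_le_exp.2 (mul_le_mul_of_nonpos_left (by linarith) (by linarith))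
    have key := exp_neg_mul_mul_sub_le (x := T (r - 1) - T 0) (y := T r - T 0) ha
    rw [sub_sub_sub_cancel_right] at key
    exact key.trans (mul_le_mul_of_nonneg_right (by linarith [hstep r hr]) (by linarith))
  calc ∑ r ∈ Icc 1 ℓ, exp (-a * (T (r - 1) - T 0)) * (T r - T (r - 1))
      ≤ ∑ r ∈ Icc 1 ℓ, (a⁻¹ + h) * (g (r - 1) - g r) := sum_le_sum hterm
    _ = (a⁻¹ + h) * (1 - g ℓ) := by rw [← mul_sum, sum_Icc_pred_sub]; simp [g]
    _ ≤ a⁻¹ + h := mul_le_of_le_one_right (by positivity) (by simp [g, (exp_pos _).le])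

theorem Real.rpow_le_exp_neg_mul {β κ x y : ℝ} (hβ : 0 < β) (h : κ * x ≤ log β⁻¹ * y) :
    β ^ y ≤ exp (-κ * x) := by
  rw [rpow_def_of_pos hβ, exp_le_exp, log_inv] at *
  linarith

theorem Real.exp_mul_rpow_mul_le {c a β γ₀ h m t₀ s t u : ℝ} (hc : 0 ≤ c) (ha : 0 ≤ a)
    (hβ : 0 < β) (hγ₀ : 0 < γ₀) (hrate : 2 * c + a ≤ (1 / 2) * γ₀⁻¹ * log β⁻¹)
    (hs : t₀ ≤ s) (hst : s ≤ t) (hstep : t - s ≤ h) (hgap : (s - t₀) / γ₀ ≤ m) :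
    exp (-(2 * c) * (u - t)) * β ^ (m / 2) * (t - s)
      ≤ exp (2 * c * h) * exp (-(2 * c) * (u - t₀)) * (exp (-a * (s - t₀)) * (t - s)) := by
  have hlog : 0 ≤ log β⁻¹ := by
    have : 0 ≤ γ₀⁻¹ * log β⁻¹ := by linarith
    exact (mul_nonneg_iff_of_pos_left (inv_pos.2 hγ₀)).1 this
  have hpow : β ^ (m / 2) ≤ exp (-(2 * c + a) * (s - t₀)) := by
    refine rpow_le_exp_neg_mul hβ ?_
    calc (2 * c + a) * (s - t₀)
        ≤ (1 / 2) * γ₀⁻¹ * log β⁻¹ * (s - t₀) := by gcongr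
      _ = log β⁻¹ * ((s - t₀) / γ₀ / 2) := by ring
      _ ≤ log β⁻¹ * (m / 2) := by gcongr
  -- `u - t ≥ (u - t₀) - (s - t₀) - h`: the single step `t - s` costs the factor `e^{2ch}`.
  have hexp : exp (-(2 * c) * (u - t)) * exp (-(2 * c + a) * (s - t₀))
      ≤ exp (2 * c * h) * exp (-(2 * c) * (u - t₀)) * exp (-a * (s - t₀)) := by
    simp only [← exp_add]
    exact exp_le_exp.2 (by nlinarith [mul_nonneg hc (sub_nonneg.2 hstep)])
  calc exp (-(2 * c) * (u - t)) * β ^ (m / 2) * (t - s)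
      ≤ exp (-(2 * c) * (u - t)) * exp (-(2 * c + a) * (s - t₀)) * (t - s) := by
        gcongr
    _ ≤ exp (2 * c * h) * exp (-(2 * c) * (u - t₀)) * exp (-a * (s - t₀)) * (t - s) := by
        gcongr
    _ = _ := by ring

theorem stmt17_summation_estimate_general
    (c δ γ₀ ρ β : ℝ) (hc : 0 < c) (hδ : 0 < δ) (hγ₀ : 0 < γ₀) (hρ : 0 < ρ)
    (hβ0 : 0 < β)
    (hmargin : δ * γ₀⁻¹ ≤ (1 / 2) * γ₀⁻¹ * Real.log β⁻¹ - 2 * c)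
    (n : ℕ → ℕ)
    (T : ℕ → ℝ) (hTmono : Monotone T)
    (hstep : ∀ r : ℕ, 1 ≤ r → T r - T (r - 1) ≤ ρ * Real.sqrt γ₀)
    (hgap : ∀ r : ℕ, 1 ≤ r → (T (r - 1) - T 0) / γ₀ ≤ (n (r - 1) : ℝ) - (n 0 : ℝ)) :
    ∀ ℓ : ℕ, 1 ≤ ℓ →
      ∑ r ∈ Finset.Icc 1 ℓ,
          Real.exp (-(2 * c) * (T ℓ - T r))
            * β ^ (((n (r - 1) : ℝ) - (n 0 : ℝ)) / 2)
            * (T r - T (r - 1))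
        ≤ Real.exp (2 * c * ρ * Real.sqrt γ₀) * (ρ * Real.sqrt γ₀ + δ⁻¹ * γ₀)
            * Real.exp (-(2 * c) * (T ℓ - T 0)) := by
  intro ℓ _
  set a := δ * γ₀⁻¹
  have ha : 0 < a := by positivity
  have hrate : 2 * c + a ≤ (1 / 2) * γ₀⁻¹ * log β⁻¹ := by linarith
  set K := exp (2 * c * (ρ * √γ₀)) * exp (-(2 * c) * (T ℓ - T 0))
  have hterm : ∀ r ∈ Icc 1 ℓ,
      exp (-(2 * c) * (T ℓ - T r)) * β ^ (((n (r - 1) : ℝ) - (n 0 : ℝ)) / 2) * (T r - T (r - 1))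
        ≤ K * (exp (-a * (T (r - 1) - T 0)) * (T r - T (r - 1))) := fun r hr ↦
    exp_mul_rpow_mul_le hc.le ha.le hβ0 hγ₀ hrate (hTmono (Nat.zero_le _))
      (hTmono (Nat.sub_le r 1)) (hstep r (mem_Icc.1 hr).1) (hgap r (mem_Icc.1 hr).1)
  calc _ ≤ ∑ r ∈ Icc 1 ℓ, K * (exp (-a * (T (r - 1) - T 0)) * (T r - T (r - 1))) :=
        sum_le_sum hterm
    _ = K * ∑ r ∈ Icc 1 ℓ, exp (-a * (T (r - 1) - T 0)) * (T r - T (r - 1)) :=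
        (mul_sum _ _ _).symm
    _ ≤ K * (a⁻¹ + ρ * √γ₀) := by
        gcongr
        exact sum_exp_neg_mul_mul_sub_le ha (by positivity) hTmono
          (fun r hr ↦ hstep r (mem_Icc.1 hr).1)
    _ = _ := by
        simp only [K, a, mul_inv, inv_inv, ← mul_assoc]
        ring

/-- the key summation estimate in the proof of the main theorem.
`T r = t_{n_r}` are the partition times, `n : ℕ → ℕ` the partition indices. Under the
hypotheses (i) `T r − T (r−1) ≤ ρ√γ₀`, (ii) `n_{r−1} − n₀ ≥ (T(r−1) − T 0)/γ₀`, and the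
margin condition `(1/2)γ₀⁻¹ log β⁻¹ − 2c ≥ δγ₀⁻¹`, one has for every `ℓ ≥ 1`:
`Σ_{r=1}^ℓ e^{−2c(T ℓ − T r)} β^{(n_{r−1} − n₀)/2} (T r − T (r−1))
   ≤ e^{2cρ√γ₀} (ρ√γ₀ + δ⁻¹γ₀) e^{−2c(T ℓ − T 0)}`. -/
theorem stmt17_summation_estimate
    (c δ γ₀ ρ β : ℝ) (hc : 0 < c) (hδ : 0 < δ) (hγ₀ : 0 < γ₀) (hρ : 0 < ρ)
    (hβ0 : 0 < β) (hβ1 : β < 1)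
    (hmargin : δ * γ₀⁻¹ ≤ (1 / 2) * γ₀⁻¹ * Real.log β⁻¹ - 2 * c)
    (n : ℕ → ℕ) (hnmono : Monotone n)
    (T : ℕ → ℝ) (hTmono : Monotone T)
    (hstep : ∀ r : ℕ, 1 ≤ r → T r - T (r - 1) ≤ ρ * Real.sqrt γ₀)
    (hgap : ∀ r : ℕ, 1 ≤ r → (T (r - 1) - T 0) / γ₀ ≤ (n (r - 1) : ℝ) - (n 0 : ℝ)) :
    ∀ ℓ : ℕ, 1 ≤ ℓ →
      ∑ r ∈ Finset.Icc 1 ℓ,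
          Real.exp (-(2 * c) * (T ℓ - T r))
            * β ^ (((n (r - 1) : ℝ) - (n 0 : ℝ)) / 2)
            * (T r - T (r - 1))
        ≤ Real.exp (2 * c * ρ * Real.sqrt γ₀) * (ρ * Real.sqrt γ₀ + δ⁻¹ * γ₀)
            * Real.exp (-(2 * c) * (T ℓ - T 0)) :=
  stmt17_summation_estimate_general c δ γ₀ ρ β hc hδ hγ₀ hρ hβ0 hmargin n T hTmono hstep hgap
end
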